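/- arXiv:2511.11237 — 7 statements merged into one kernel-verified Lean document; each statement's English description precedes it below -/
import Mathlib

section
/- The function x ↦ ∑_{i=1}^d β_i (|x|↓)_i, where β ∈ ℝ^d_{≥0} is sorted non-increasingly with β₁ > 0, is a norm on ℝ^d. -/
open Finset

noncomputable def sortDesc {d : ℕ} (x : Fin d → ℝ) : Fin d → ℝ :=
  fun i => x (Tuple.sort x i.rev)

noncomputable def orderedNorm {d : ℕ} (β x : Fin d → ℝ) : ℝ :=
  ∑ i, β i * sortDesc (fun j => |x j|) i

/-- The descending sort is `w` composed with a permutation. -/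
noncomputable def sortDescPerm {d : ℕ} (w : Fin d → ℝ) : Equiv.Perm (Fin d) :=
  (Fin.revPerm).trans (Tuple.sort w)

lemma sortDesc_eq_comp {d : ℕ} (w : Fin d → ℝ) :
    sortDesc w = w ∘ (sortDescPerm w) := rfl

lemma sortDesc_antitone {d : ℕ} (w : Fin d → ℝ) : Antitone (sortDesc w) := by
  intro i j hij
  exact Tuple.monotone_sort w (by simpa [Fin.rev_le_rev] using hij)

lemma monovary_sortDesc {d : ℕ} {β : Fin d → ℝ} (hsort : Antitone β) (w : Fin d → ℝ) :
    Monovary β (sortDesc w) := by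
  intro i j h
  rcases le_or_gt j i with hji | hij
  · exact hsort hji
  · exact absurd (sortDesc_antitone w hij.le) (not_le.mpr h)

/-- Rearrangement: sum against the descending sort dominates sum against any permutation. -/
lemma sum_le_sortDesc {d : ℕ} {β : Fin d → ℝ} (hsort : Antitone β)
    (w : Fin d → ℝ) (σ : Equiv.Perm (Fin d)) :
    ∑ i, β i * w (σ i) ≤ ∑ i, β i * sortDesc w i := by
  have key : ∀ i, w (σ i) = sortDesc w (((sortDescPerm w)⁻¹ * σ) i) := by
    intro i
    simp [sortDesc_eq_comp, Equiv.Perm.mul_apply]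
  calc ∑ i, β i * w (σ i) = ∑ i, β i * sortDesc w (((sortDescPerm w)⁻¹ * σ) i) := by
        simp_rw [key]
    _ ≤ ∑ i, β i * sortDesc w i :=
        (monovary_sortDesc hsort w).sum_mul_comp_perm_le_sum_mul

lemma sortDesc_smul {d : ℕ} (w : Fin d → ℝ) {c : ℝ} (hc : 0 ≤ c) :
    ∀ i, sortDesc (c • w) i = c * sortDesc w i := by
  have h1 : Monotone ((c • w) ∘ Tuple.sort (c • w)) := Tuple.monotone_sort _
  have h2 : Monotone ((c • w) ∘ Tuple.sort w) := by
    intro i j hij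
    simp only [Function.comp_apply, Pi.smul_apply, smul_eq_mul]
    exact mul_le_mul_of_nonneg_left (Tuple.monotone_sort w hij) hc
  have heq := Tuple.unique_monotone h1 h2
  intro i
  have := congrFun heq i.rev
  simpa [sortDesc] using this

/-- Each value of `sortDesc w` is a value of `w`. -/
lemma sortDesc_mem {d : ℕ} (w : Fin d → ℝ) (i : Fin d) :
    ∃ j, sortDesc w i = w j := ⟨_, rfl⟩

lemma le_sortDesc_zero {d : ℕ} (hd : 0 < d) (w : Fin d → ℝ) (j : Fin d) :
    w j ≤ sortDesc w ⟨0, hd⟩ := by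
  have : w j = sortDesc w ((sortDescPerm w)⁻¹ j) := by
    simp [sortDesc_eq_comp]
  rw [this]
  exact sortDesc_antitone w (Fin.mk_le_of_le_val (Nat.zero_le _))

theorem stmt1 {d : ℕ} (hd : 0 < d) (β : Fin d → ℝ)
    (hsort : Antitone β) (hnn : ∀ i, 0 ≤ β i) (hpos : 0 < β ⟨0, hd⟩) :
    (∀ x : Fin d → ℝ, 0 ≤ orderedNorm β x) ∧
    (∀ x : Fin d → ℝ, orderedNorm β x = 0 ↔ x = 0) ∧
    (∀ (c : ℝ) (x : Fin d → ℝ), orderedNorm β (c • x) = |c| * orderedNorm β x) ∧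
    (∀ x y : Fin d → ℝ, orderedNorm β (x + y) ≤ orderedNorm β x + orderedNorm β y) := by
  have term_nonneg : ∀ (x : Fin d → ℝ) (i : Fin d),
      0 ≤ β i * sortDesc (fun j => |x j|) i := by
    intro x i
    obtain ⟨j, hj⟩ := sortDesc_mem (fun j => |x j|) i
    exact mul_nonneg (hnn i) (hj ▸ abs_nonneg _)
  have nonneg : ∀ x : Fin d → ℝ, 0 ≤ orderedNorm β x := fun x =>
    Finset.sum_nonneg fun i _ => term_nonneg x i
  refine ⟨nonneg, ?_, ?_, ?_⟩
  · -- definiteness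
    intro x
    constructor
    · intro h
      funext j
      have hall := (Finset.sum_eq_zero_iff_of_nonneg
        (fun i _ => term_nonneg x i)).mp h ⟨0, hd⟩ (Finset.mem_univ _)
      have hM : sortDesc (fun j => |x j|) ⟨0, hd⟩ = 0 := by
        rcases mul_eq_zero.mp hall with h0 | h0
        · exact absurd h0 (ne_of_gt hpos)
        · exact h0
      have := le_sortDesc_zero hd (fun j => |x j|) j
      rw [hM] at this
      have : |x j| = 0 := le_antisymm this (abs_nonneg _)
      simpa using this
    · intro h
      subst h
      simp [orderedNorm, sortDesc]
  · -- homogeneity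
    intro c x
    have hfun : (fun j => |(c • x) j|) = |c| • fun j => |x j| := by
      funext j; simp [abs_mul]
    unfold orderedNorm
    rw [hfun, Finset.mul_sum]
    refine Finset.sum_congr rfl fun i _ => ?_
    rw [sortDesc_smul _ (abs_nonneg c) i]; ring
  · -- triangle inequality
    intro x y
    set u : Fin d → ℝ := fun j => |x j|
    set v : Fin d → ℝ := fun j => |y j|
    set w : Fin d → ℝ := fun j => |(x + y) j|
    set σ := sortDescPerm w
    have hw : ∀ i, sortDesc w i = w (σ i) := fun i => rfl
    have huv : ∀ j, w j ≤ u j + v j := fun j => abs_add_le _ _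
    calc orderedNorm β (x + y) = ∑ i, β i * w (σ i) := by
          exact Finset.sum_congr rfl fun i _ => by rw [hw]
      _ ≤ ∑ i, β i * (u (σ i) + v (σ i)) := by
          refine Finset.sum_le_sum fun i _ => ?_
          exact mul_le_mul_of_nonneg_left (huv (σ i)) (hnn i)
      _ = (∑ i, β i * u (σ i)) + ∑ i, β i * v (σ i) := by
          rw [← Finset.sum_add_distrib]; refine Finset.sum_congr rfl fun i _ => by ring
      _ ≤ orderedNorm β x + orderedNorm β y :=
          add_le_add (sum_le_sortDesc hsort u σ) (sum_le_sortDesc hsort v σ)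
end

section
/- For a sorted non-increasing β ∈ ℝ^d_{≥0}, the convex hull of all permutations of β equals the set {y ∈ ℝ^d_{≥0} : ∑_{i∈J} y_i ≤ ∑_{i=1}^{|J|} β_i for all J ⊆ {1,…,d}, and ∑_{i=1}^d y_i = ∑_{i=1}^d β_i}. -/
open Finset

def permutahedron {d : ℕ} (β : Fin d → ℝ) : Set (Fin d → ℝ) :=
  convexHull ℝ {y | ∃ σ : Equiv.Perm (Fin d), y = β ∘ σ}

private lemma card_filter_lt_aux {d k : ℕ} (hk : k ≤ d) :
    #(univ.filter (fun i : Fin d => (i : ℕ) < k)) = k := by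
  rw [show (univ.filter (fun i : Fin d => (i : ℕ) < k)) =
      (range k).attachFin (fun m hm => lt_of_lt_of_le (mem_range.mp hm) hk) by
    ext i; simp [Finset.mem_attachFin]]
  rw [Finset.card_attachFin, Finset.card_range]

private lemma abel_aux (d : ℕ) (A W : ℕ → ℝ)
    (hA : ∀ k, k + 1 < d → A (k+1) ≤ A k)
    (hW0 : W 0 = 0) (hWd : W d = 0) (hW : ∀ k ≤ d, W k ≤ 0) :
    ∑ k ∈ range d, A k * (W (k+1) - W k) ≤ 0 := by
  have hG : ∀ n, ∑ i ∈ range n, (W (i+1) - W i) = W n := by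
    intro n; rw [Finset.sum_range_sub W, hW0, sub_zero]
  simp only [← smul_eq_mul]
  rw [Finset.sum_range_by_parts A (fun k => W (k+1) - W k) d]
  simp only [smul_eq_mul, hG, hWd, mul_zero, zero_sub, neg_nonpos]
  apply Finset.sum_nonneg
  intro k hk
  rw [mem_range] at hk
  have h1 : k + 1 < d := by omega
  have := hA k h1
  have h2 : W (k+1) ≤ 0 := hW _ (by omega)
  nlinarith

/-- A sum over any `K` is at most the sum over the `#K` largest entries. -/
private lemma sum_le_initial {d : ℕ} (β : Fin d → ℝ) (hsort : Antitone β)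
    (hnn : ∀ i, 0 ≤ β i) (K : Finset (Fin d)) :
    ∑ i ∈ K, β i ≤ ∑ i ∈ univ.filter (fun i : Fin d => (i : ℕ) < K.card), β i := by
  set k := K.card with hk
  set L := univ.filter (fun i : Fin d => (i : ℕ) < k) with hL
  have hkd : k ≤ d := by
    rw [hk]; simpa using Finset.card_le_card (Finset.subset_univ K)
  have hLcard : L.card = k := card_filter_lt_aux hkd
  rcases Finset.eq_empty_or_nonempty (K \ L) with hKL | hKL
  · -- K ⊆ L
    have hsub : K ⊆ L := by
      intro i hi
      by_contra hiL
      exact absurd (Finset.mem_sdiff.mpr ⟨hi, hiL⟩) (by simp [hKL])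
    exact Finset.sum_le_sum_of_subset_of_nonneg hsub (fun i _ _ => hnn i)
  · obtain ⟨i0, hi0⟩ := hKL
    rw [Finset.mem_sdiff, hL, Finset.mem_filter] at hi0
    have hkd' : k < d := by
      have : ¬ ((i0 : ℕ) < k) := fun h => hi0.2 ⟨mem_univ _, h⟩
      omega
    set m : Fin d := ⟨k, hkd'⟩ with hm
    have hcard_eq : (K \ L).card = (L \ K).card := by
      have e1 := Finset.card_sdiff_add_card_inter K L
      have e2 := Finset.card_sdiff_add_card_inter L K
      rw [Finset.inter_comm] at e2
      omega
    have h1 : ∑ i ∈ K \ L, β i ≤ (K \ L).card • β m := by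
      apply Finset.sum_le_card_nsmul
      intro i hi
      rw [Finset.mem_sdiff, hL, Finset.mem_filter] at hi
      have : ¬ ((i : ℕ) < k) := fun h => hi.2 ⟨mem_univ _, h⟩
      exact hsort (by simp [hm, Fin.le_def]; omega)
    have h2 : (L \ K).card • β m ≤ ∑ i ∈ L \ K, β i := by
      apply Finset.card_nsmul_le_sum
      intro i hi
      rw [Finset.mem_sdiff, hL, Finset.mem_filter] at hi
      exact hsort (by simp [hm, Fin.le_def]; omega)
    have h3 : ∑ i ∈ K, β i = ∑ i ∈ K ∩ L, β i + ∑ i ∈ K \ L, β i :=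
      (Finset.sum_inter_add_sum_sdiff K L β).symm
    have h4 : ∑ i ∈ L, β i = ∑ i ∈ L ∩ K, β i + ∑ i ∈ L \ K, β i :=
      (Finset.sum_inter_add_sum_sdiff L K β).symm
    rw [Finset.inter_comm] at h4
    rw [hcard_eq] at h1
    linarith

private lemma key_ineq {d : ℕ} (β a z : Fin d → ℝ) (ha : Antitone a)
    (hcons : ∀ k : ℕ, k ≤ d →
      ∑ i ∈ univ.filter (fun i : Fin d => (i : ℕ) < k), z i ≤
      ∑ i ∈ univ.filter (fun i : Fin d => (i : ℕ) < k), β i)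
    (hsum : ∑ i, z i = ∑ i, β i) :
    ∑ i, a i * z i ≤ ∑ i, a i * β i := by
  set W : ℕ → ℝ := fun k => ∑ i ∈ univ.filter (fun i : Fin d => (i : ℕ) < k), (z i - β i)
    with hWdef
  set A : ℕ → ℝ := fun k => if h : k < d then a ⟨k, h⟩ else 0 with hAdef
  have hW0 : W 0 = 0 := by simp [hWdef]
  have hWd : W d = 0 := by
    have : (univ.filter (fun i : Fin d => (i : ℕ) < d)) = univ := by
      apply Finset.filter_true_of_mem; intro i _; exact i.isLt
    simp only [hWdef, this, Finset.sum_sub_distrib, hsum, sub_self]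
  have hWle : ∀ k ≤ d, W k ≤ 0 := by
    intro k hk
    simp only [hWdef, Finset.sum_sub_distrib, sub_nonpos]
    exact hcons k hk
  have hA : ∀ k, k + 1 < d → A (k+1) ≤ A k := by
    intro k hk
    simp only [hAdef, dif_pos hk, dif_pos (by omega : k < d)]
    exact ha (by simp [Fin.le_def])
  have hstep : ∀ i : Fin d, W ((i : ℕ) + 1) - W (i : ℕ) = z i - β i := by
    intro i
    have hins : (univ.filter (fun j : Fin d => (j : ℕ) < (i : ℕ) + 1)) =
        insert i (univ.filter (fun j : Fin d => (j : ℕ) < (i : ℕ))) := by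
      ext j
      simp only [Finset.mem_insert, Finset.mem_filter, mem_univ, true_and]
      constructor
      · intro h
        rcases Nat.lt_or_ge (j : ℕ) (i : ℕ) with h' | h'
        · exact Or.inr h'
        · exact Or.inl (Fin.ext (by omega))
      · rintro (rfl | h)
        · omega
        · omega
    rw [hWdef]
    simp only [hins]
    rw [Finset.sum_insert (by simp)]
    ring
  have key : ∑ i : Fin d, a i * (z i - β i) ≤ 0 := by
    have : ∀ i : Fin d, a i * (z i - β i) =
        (fun k : ℕ => A k * (W (k+1) - W k)) (i : ℕ) := by
      intro i
      simp only [hstep i, hAdef, dif_pos i.isLt]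
    calc ∑ i : Fin d, a i * (z i - β i)
        = ∑ i : Fin d, (fun k : ℕ => A k * (W (k+1) - W k)) (i : ℕ) :=
          Finset.sum_congr rfl (fun i _ => this i)
      _ = ∑ k ∈ range d, A k * (W (k+1) - W k) :=
          Fin.sum_univ_eq_sum_range (fun k : ℕ => A k * (W (k+1) - W k)) d
      _ ≤ 0 := abel_aux d A W hA hW0 hWd hWle
  have expand : ∑ i : Fin d, a i * (z i - β i) =
      (∑ i, a i * z i) - ∑ i, a i * β i := by
    rw [← Finset.sum_sub_distrib]; congr 1; ext i; ring
  linarith [key, expand.symm.le]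

theorem stmt3 {d : ℕ} (β : Fin d → ℝ) (hsort : Antitone β) (hnn : ∀ i, 0 ≤ β i) :
    permutahedron β =
      {y : Fin d → ℝ | (∀ i, 0 ≤ y i) ∧
        (∀ J : Finset (Fin d),
          ∑ i ∈ J, y i ≤ ∑ i ∈ univ.filter (fun i : Fin d => (i : ℕ) < J.card), β i) ∧
        ∑ i, y i = ∑ i, β i} := by
  set P : Set (Fin d → ℝ) := {y | ∃ σ : Equiv.Perm (Fin d), y = β ∘ σ} with hP
  set S : Set (Fin d → ℝ) := {y : Fin d → ℝ | (∀ i, 0 ≤ y i) ∧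
        (∀ J : Finset (Fin d),
          ∑ i ∈ J, y i ≤ ∑ i ∈ univ.filter (fun i : Fin d => (i : ℕ) < J.card), β i) ∧
        ∑ i, y i = ∑ i, β i} with hS
  have hPS : P ⊆ S := by
    rintro _ ⟨σ, rfl⟩
    refine ⟨fun i => hnn _, fun J => ?_, ?_⟩
    · have himg : ∑ i ∈ J, (β ∘ σ) i = ∑ j ∈ J.image σ, β j := by
        rw [Finset.sum_image (fun a _ b _ h => σ.injective h)]
        rfl
      have hcard : (J.image σ).card = J.card :=
        Finset.card_image_of_injective J σ.injective
      rw [himg]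
      calc ∑ j ∈ J.image σ, β j
          ≤ ∑ i ∈ univ.filter (fun i : Fin d => (i : ℕ) < (J.image σ).card), β i :=
            sum_le_initial β hsort hnn _
        _ = ∑ i ∈ univ.filter (fun i : Fin d => (i : ℕ) < J.card), β i := by rw [hcard]
    · exact Equiv.sum_comp σ β
  have hSconv : Convex ℝ S := by
    rintro x ⟨hx0, hxJ, hxs⟩ y ⟨hy0, hyJ, hys⟩ a b ha hb hab
    refine ⟨fun i => ?_, fun J => ?_, ?_⟩
    · have := hx0 i; have := hy0 i
      simp only [Pi.add_apply, Pi.smul_apply, smul_eq_mul]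
      nlinarith
    · have : ∑ i ∈ J, (a • x + b • y) i = a * ∑ i ∈ J, x i + b * ∑ i ∈ J, y i := by
        simp only [Pi.add_apply, Pi.smul_apply, smul_eq_mul, Finset.sum_add_distrib,
          Finset.mul_sum]
      rw [this]
      have hx := hxJ J; have hy := hyJ J
      calc a * ∑ i ∈ J, x i + b * ∑ i ∈ J, y i
          ≤ a * (∑ i ∈ univ.filter (fun i : Fin d => (i : ℕ) < J.card), β i)
            + b * (∑ i ∈ univ.filter (fun i : Fin d => (i : ℕ) < J.card), β i) :=
            add_le_add (mul_le_mul_of_nonneg_left hx ha) (mul_le_mul_of_nonneg_left hy hb)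
        _ = ∑ i ∈ univ.filter (fun i : Fin d => (i : ℕ) < J.card), β i := by
            rw [← add_mul, hab, one_mul]
    · have : ∑ i, (a • x + b • y) i = a * ∑ i, x i + b * ∑ i, y i := by
        simp only [Pi.add_apply, Pi.smul_apply, smul_eq_mul, Finset.sum_add_distrib,
          Finset.mul_sum]
      rw [this, hxs, hys, ← add_mul, hab, one_mul]
  apply Set.Subset.antisymm
  · exact convexHull_min hPS hSconv
  · intro y hy
    by_contra hyc
    have hPfin : P.Finite := by
      have : P = Set.range (fun σ : Equiv.Perm (Fin d) => β ∘ σ) := by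
        ext x; simp [hP, eq_comm, Set.range]
      rw [this]
      exact Set.finite_range _
    have hclosed : IsClosed (convexHull ℝ P) := (hPfin.isCompact_convexHull ℝ).isClosed
    obtain ⟨f, u, hfu, huy⟩ :=
      geometric_hahn_banach_closed_point (convex_convexHull ℝ P) hclosed hyc
    set c : Fin d → ℝ := fun i => f (fun j => if i = j then (1:ℝ) else 0) with hc
    have hf : ∀ x : Fin d → ℝ, f x = ∑ i, c i * x i := by
      intro x
      conv_lhs => rw [pi_eq_sum_univ x]
      rw [map_sum]
      apply Finset.sum_congr rfl
      intro i _
      rw [map_smul, smul_eq_mul, mul_comm]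
    set τ : Equiv.Perm (Fin d) := Tuple.sort (-c) with hτ
    have haanti : Antitone (c ∘ τ) := by
      have hm : Monotone ((-c) ∘ τ) := Tuple.monotone_sort (-c)
      intro i j hij
      have := hm hij
      simp only [Function.comp_apply, Pi.neg_apply] at this ⊢
      linarith
    set z : Fin d → ℝ := y ∘ τ with hz
    obtain ⟨hy0, hyJ, hys⟩ := hy
    have hcons : ∀ k : ℕ, k ≤ d →
        ∑ i ∈ univ.filter (fun i : Fin d => (i : ℕ) < k), z i ≤
        ∑ i ∈ univ.filter (fun i : Fin d => (i : ℕ) < k), β i := by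
      intro k hk
      set J : Finset (Fin d) := (univ.filter (fun i : Fin d => (i : ℕ) < k)).image τ with hJ
      have hJcard : J.card = k := by
        rw [hJ, Finset.card_image_of_injective _ τ.injective, card_filter_lt_aux hk]
      have hsumJ : ∑ i ∈ univ.filter (fun i : Fin d => (i : ℕ) < k), z i = ∑ j ∈ J, y j := by
        rw [hJ, Finset.sum_image (fun a _ b _ h => τ.injective h)]
        rfl
      rw [hsumJ]
      have := hyJ J
      rwa [hJcard] at this
    have hsum : ∑ i, z i = ∑ i, β i := by
      rw [hz]
      have : ∑ i, (y ∘ τ) i = ∑ i, y i := Equiv.sum_comp τ y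
      rw [this, hys]
    have hkey : ∑ i, (c ∘ τ) i * z i ≤ ∑ i, (c ∘ τ) i * β i :=
      key_ineq β (c ∘ τ) z haanti hcons hsum
    have hfy : f y = ∑ i, (c ∘ τ) i * z i := by
      rw [hf y, ← Equiv.sum_comp τ (fun i => c i * y i)]
      rfl
    have hmem : β ∘ τ.symm ∈ convexHull ℝ P :=
      subset_convexHull ℝ P ⟨τ.symm, rfl⟩
    have hfβ : f (β ∘ τ.symm) = ∑ i, (c ∘ τ) i * β i := by
      rw [hf (β ∘ τ.symm), ← Equiv.sum_comp τ (fun i => c i * (β ∘ τ.symm) i)]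
      apply Finset.sum_congr rfl
      intro i _
      simp
    have := hfu _ hmem
    rw [hfβ] at this
    linarith
end

section
/- Let Ψ : ℝ^d_{≥0} → ℝ_{≥0} be a differentiable convex function that is a (δ, η)-approximation of an ordered norm ‖·‖ with β₁ > 0. Then ∇Ψ(x) > 0 componentwise and ‖∇Ψ(x)‖* ≤ 1 for all x ∈ ℝ^d_{≥0}, where ‖·‖* denotes the dual norm of ‖·‖. -/
open Finset

lemma my_le_orderedNorm_single {d : ℕ} (hd : 0 < d) (β : Fin d → ℝ) (hβnn : ∀ i, 0 ≤ β i)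
    (w : Fin d → ℝ) (k : Fin d) : β ⟨0, hd⟩ * |w k| ≤ orderedNorm β w := by
  set g : Fin d → ℝ := fun j => |w j| with hg
  have h1 : g k ≤ sortDesc g ⟨0, hd⟩ := by
    have h2 : g k = (g ∘ Tuple.sort g) ((Tuple.sort g).symm k) := by simp
    rw [h2]
    apply Tuple.monotone_sort g
    have := ((Tuple.sort g).symm k).isLt
    simp only [Fin.le_def, Fin.val_rev]
    omega
  calc β ⟨0, hd⟩ * |w k| ≤ β ⟨0, hd⟩ * sortDesc g ⟨0, hd⟩ :=
        mul_le_mul_of_nonneg_left h1 (hβnn _)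
    _ ≤ ∑ i, β i * sortDesc g i := by
        apply Finset.single_le_sum (f := fun i => β i * sortDesc g i) ?_ (mem_univ _)
        intro i _
        exact mul_nonneg (hβnn i) (abs_nonneg _)
    _ = orderedNorm β w := rfl

lemma my_sum_perm_le_orderedNorm {d : ℕ} (β : Fin d → ℝ) (hsort : Antitone β)
    (w : Fin d → ℝ) (σ : Equiv.Perm (Fin d)) :
    ∑ i, β i * |w (σ i)| ≤ orderedNorm β w := by
  set g : Fin d → ℝ := fun j => |w j| with hg
  have hganti : Antitone (sortDesc g) := by
    intro i j hij
    exact Tuple.monotone_sort g (by rwa [Fin.rev_le_rev])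
  have hmv : Monovary β (sortDesc g) := hsort.monovary hganti
  set ρ : Equiv.Perm (Fin d) := Fin.revPerm.trans (Tuple.sort g) with hρdef
  have hρ : ∀ i, sortDesc g i = g (ρ i) := fun i => rfl
  have key := hmv.sum_mul_comp_perm_le_sum_mul (σ := σ.trans ρ.symm)
  calc ∑ i, β i * |w (σ i)| = ∑ i, β i * sortDesc g ((σ.trans ρ.symm) i) := by
        refine Finset.sum_congr rfl fun i _ => ?_
        rw [hρ]
        simp [hg]
    _ ≤ ∑ i, β i * sortDesc g i := key
    _ = orderedNorm β w := rfl

lemma my_orderedNorm_add_smul_le {d : ℕ} (β : Fin d → ℝ) (hsort : Antitone β)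
    (x z : Fin d → ℝ) (hx : ∀ i, 0 ≤ x i) (hz : ∀ i, 0 ≤ z i) (t : ℝ) (ht : 0 ≤ t) :
    orderedNorm β (x + t • z) ≤ orderedNorm β x + t * orderedNorm β z := by
  set w : Fin d → ℝ := x + t • z with hw
  have hwnn : ∀ i, 0 ≤ w i := fun i => add_nonneg (hx i) (mul_nonneg ht (hz i))
  set g : Fin d → ℝ := fun j => |w j| with hg
  set ρ : Equiv.Perm (Fin d) := Fin.revPerm.trans (Tuple.sort g) with hρdef
  have expand : orderedNorm β w = ∑ i, β i * (x (ρ i) + t * z (ρ i)) := by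
    refine Finset.sum_congr rfl fun i _ => ?_
    have h1 : sortDesc g i = g (ρ i) := rfl
    rw [h1]
    congr 1
    simp only [hg]
    rw [abs_of_nonneg (hwnn _)]
    rfl
  rw [expand]
  have hsplit : ∑ i, β i * (x (ρ i) + t * z (ρ i))
      = ∑ i, β i * x (ρ i) + t * ∑ i, β i * z (ρ i) := by
    rw [Finset.mul_sum, ← Finset.sum_add_distrib]
    exact Finset.sum_congr rfl fun i _ => by ring
  rw [hsplit]
  have h1 : ∑ i, β i * x (ρ i) ≤ orderedNorm β x := by
    calc ∑ i, β i * x (ρ i) = ∑ i, β i * |x (ρ i)| := by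
          refine Finset.sum_congr rfl fun i _ => ?_
          rw [abs_of_nonneg (hx _)]
      _ ≤ orderedNorm β x := my_sum_perm_le_orderedNorm β hsort x ρ
  have h2 : ∑ i, β i * z (ρ i) ≤ orderedNorm β z := by
    calc ∑ i, β i * z (ρ i) = ∑ i, β i * |z (ρ i)| := by
          refine Finset.sum_congr rfl fun i _ => ?_
          rw [abs_of_nonneg (hz _)]
      _ ≤ orderedNorm β z := my_sum_perm_le_orderedNorm β hsort z ρ
  have := mul_le_mul_of_nonneg_left h2 ht
  linarith

lemma my_convex_grad_ineq {d : ℕ} {Ψ : (Fin d → ℝ) → ℝ} {gradΨ : (Fin d → ℝ) → (Fin d → ℝ)}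
    (hconv : ConvexOn ℝ {x : Fin d → ℝ | ∀ i, 0 ≤ x i} Ψ)
    (hdiff : ∀ x, (∀ i, 0 ≤ x i) →
      HasFDerivAt Ψ (∑ i, gradΨ x i • (ContinuousLinearMap.proj i : (Fin d → ℝ) →L[ℝ] ℝ)) x)
    (x v : Fin d → ℝ) (hx : ∀ i, 0 ≤ x i) (hv : ∀ i, 0 ≤ v i) (s : ℝ) (hs : 0 < s) :
    s * ∑ i, v i * gradΨ x i ≤ Ψ (x + s • v) - Ψ x ∧
    Ψ (x + s • v) - Ψ x ≤ s * ∑ i, v i * gradΨ (x + s • v) i := by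
  set φ : ℝ → ℝ := fun t => Ψ (x + t • v) with hφ
  have hφconv : ConvexOn ℝ (Set.Ici (0:ℝ)) φ := by
    have hcomp := hconv.comp_affineMap (AffineMap.lineMap x (x + v))
    have heq : φ = Ψ ∘ (AffineMap.lineMap x (x + v)) := by
      funext t
      simp only [hφ, Function.comp_apply, AffineMap.lineMap_apply]
      rw [vsub_eq_sub, vadd_eq_add, add_sub_cancel_left, add_comm]
    rw [heq]
    refine hcomp.subset ?_ (convex_Ici 0)
    intro t ht
    simp only [Set.mem_preimage, AffineMap.lineMap_apply, vsub_eq_sub, vadd_eq_add,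
      add_sub_cancel_left, Set.mem_setOf_eq]
    intro i
    have : (t • v + x) i = t * v i + x i := rfl
    rw [this]
    exact add_nonneg (mul_nonneg ht (hv i)) (hx i)
  have hline : ∀ t : ℝ, HasDerivAt (fun u : ℝ => x + u • v) v t := by
    intro t
    simpa using ((hasDerivAt_id t).smul_const v).const_add x
  have hφderiv : ∀ t : ℝ, 0 ≤ t → HasDerivAt φ (∑ i, v i * gradΨ (x + t • v) i) t := by
    intro t ht
    have hp : ∀ i, 0 ≤ (x + t • v) i := fun i => add_nonneg (hx i) (mul_nonneg ht (hv i))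
    have h := (hdiff _ hp).comp_hasDerivAt t (hline t)
    refine (h : HasDerivAt φ _ t).congr_deriv ?_
    simp [ContinuousLinearMap.sum_apply, mul_comm]
  have hφ0 : φ 0 = Ψ x := by simp [hφ]
  constructor
  · have h0 : HasDerivAt φ (∑ i, v i * gradΨ x i) 0 := by
      have := hφderiv 0 le_rfl
      simpa using this
    have hsl := hφconv.le_slope_of_hasDerivAt Set.self_mem_Ici
      (Set.mem_Ici.mpr hs.le) hs h0
    rw [slope_def_field] at hsl
    rw [sub_zero] at hsl
    have := (le_div_iff₀ hs).mp hsl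
    rw [hφ0] at this
    linarith [this]
  · have h1 := hφderiv s hs.le
    have hsl := hφconv.slope_le_of_hasDerivAt Set.self_mem_Ici
      (Set.mem_Ici.mpr hs.le) hs h1
    rw [slope_def_field, sub_zero] at hsl
    have := (div_le_iff₀ hs).mp hsl
    rw [hφ0] at this
    linarith [this]

theorem stmt4 {d : ℕ} (hd : 0 < d) (β : Fin d → ℝ)
    (hsort : Antitone β) (hβnn : ∀ i, 0 ≤ β i) (hβpos : 0 < β ⟨0, hd⟩)
    (δ η : ℝ) (hδ : 0 ≤ δ) (hη : 0 < η)
    (Ψ : (Fin d → ℝ) → ℝ) (gradΨ : (Fin d → ℝ) → (Fin d → ℝ))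
    (hΨnn : ∀ x, (∀ i, 0 ≤ x i) → 0 ≤ Ψ x)
    (hconv : ConvexOn ℝ {x : Fin d → ℝ | ∀ i, 0 ≤ x i} Ψ)
    (hdiff : ∀ x, (∀ i, 0 ≤ x i) →
      HasFDerivAt Ψ (∑ i, gradΨ x i • (ContinuousLinearMap.proj i : (Fin d → ℝ) →L[ℝ] ℝ)) x)
    (happrox : ∀ x, (∀ i, 0 ≤ x i) →
      orderedNorm β x ≤ Ψ x ∧ Ψ x ≤ orderedNorm β x + δ)
    (hgrad : ∀ x y, (∀ i, 0 ≤ x i) → (∀ i, 0 ≤ y i) → ∀ i,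
      gradΨ (x + y) i ≤
        Real.exp (η * univ.sup' ⟨⟨0, hd⟩, mem_univ _⟩ y) * gradΨ x i)
    (x : Fin d → ℝ) (hx : ∀ i, 0 ≤ x i) :
    (∀ i, 0 < gradΨ x i) ∧
      (∀ z : Fin d → ℝ, (∀ i, 0 ≤ z i) → orderedNorm β z ≤ 1 →
        ∑ i, z i * gradΨ x i ≤ 1) := by
  constructor
  · intro i
    set e : Fin d → ℝ := Pi.single i 1 with he
    have henn : ∀ j, 0 ≤ e j := by
      intro j
      rw [he, Pi.single_apply]
      split <;> norm_num
    set t : ℝ := (Ψ x + 1) / β ⟨0, hd⟩ with htdef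
    have hΨx := hΨnn x hx
    have ht : 0 < t := div_pos (by linarith) hβpos
    have hβt : β ⟨0, hd⟩ * t = Ψ x + 1 := by
      rw [htdef, mul_div_cancel₀ _ hβpos.ne']
    have hA := (my_convex_grad_ineq hconv hdiff x e hx henn t ht).2
    have hsum : ∑ j, e j * gradΨ (x + t • e) j = gradΨ (x + t • e) i := by
      rw [Finset.sum_eq_single i]
      · simp [he]
      · intro j _ hji
        simp [he, Pi.single_apply, hji]
      · intro h; exact absurd (mem_univ i) h
    rw [hsum] at hA
    -- lower bound on Ψ (x + t • e)
    have hpe : ∀ j, 0 ≤ (x + t • e) j := fun j => add_nonneg (hx j) (mul_nonneg ht.le (henn j))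
    have hlow : β ⟨0, hd⟩ * t ≤ Ψ (x + t • e) := by
      have h1 := my_le_orderedNorm_single hd β hβnn (x + t • e) i
      have h2 : (x + t • e) i = x i + t := by
        simp [he]
      rw [h2, abs_of_nonneg (by linarith [hx i] : (0:ℝ) ≤ x i + t)] at h1
      have h3 : β ⟨0, hd⟩ * t ≤ β ⟨0, hd⟩ * (x i + t) :=
        mul_le_mul_of_nonneg_left (by linarith [hx i]) hβpos.le
      have h4 := (happrox _ hpe).1
      linarith
    -- sup' of t • e is t
    have hsup : univ.sup' ⟨⟨0, hd⟩, mem_univ _⟩ (t • e) = t := by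
      apply le_antisymm
      · apply Finset.sup'_le
        intro j _
        have : (t • e) j = t * e j := rfl
        rw [this, he, Pi.single_apply]
        split <;> simp <;> linarith
      · have h5 : (t • e) i = t := by simp [he]
        calc t = (t • e) i := h5.symm
          _ ≤ _ := Finset.le_sup' _ (mem_univ i)
    have hgr := hgrad x (t • e) hx (fun j => mul_nonneg ht.le (henn j)) i
    rw [hsup] at hgr
    have hchain : Ψ x + 1 ≤ Ψ (x + t • e) := by rw [← hβt]; exact hlow
    have h6 : 1 ≤ t * gradΨ (x + t • e) i := by linarith
    have h7 : t * gradΨ (x + t • e) i ≤ t * (Real.exp (η * t) * gradΨ x i) :=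
      mul_le_mul_of_nonneg_left hgr ht.le
    by_contra hcon
    push_neg at hcon
    have h8 : t * (Real.exp (η * t) * gradΨ x i) ≤ 0 := by
      apply mul_nonpos_of_nonneg_of_nonpos ht.le
      exact mul_nonpos_of_nonneg_of_nonpos (Real.exp_pos _).le hcon
    linarith
  · intro z hz hz1
    set S : ℝ := ∑ i, z i * gradΨ x i with hS
    have hbound : ∀ t : ℝ, 0 < t → t * S ≤ t + δ := by
      intro t ht
      have hA := (my_convex_grad_ineq hconv hdiff x z hx hz t ht).1
      have hpz : ∀ j, 0 ≤ (x + t • z) j := fun j => add_nonneg (hx j) (mul_nonneg ht.le (hz j))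
      have h1 := (happrox _ hpz).2
      have h2 := (happrox x hx).1
      have h3 := my_orderedNorm_add_smul_le β hsort x z hx hz t ht.le
      have h4 : t * orderedNorm β z ≤ t * 1 := mul_le_mul_of_nonneg_left hz1 ht.le
      linarith
    by_contra hcon
    push_neg at hcon
    set t : ℝ := (δ + 1) / (S - 1) with htdef
    have hS1 : 0 < S - 1 := by linarith
    have ht : 0 < t := div_pos (by linarith) hS1
    have hb := hbound t ht
    have : t * (S - 1) = δ + 1 := by
      rw [htdef, div_mul_cancel₀ _ hS1.ne']
    nlinarith
end

section
/- Let p ∈ ℝ^d_{>0} be sorted non-increasingly, let Y be the permutahedron of a sorted non-increasing β ∈ ℝ^d_{≥0} with ∑β_i = 1, and let y be the unique minimizer of the relative entropy D(y,p) = ∑_i y_i ln(y_i/p_i) over the relaxed feasible region {y ≥ 0 : ∑_{i=1}^j y_i ≤ ∑_{i=1}^j β_i for all j < d, ∑_{i=1}^d y_i = 1}. Then y is sorted non-increasingly. -/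
open Finset

noncomputable def relEntropy {d : ℕ} (y p : Fin d → ℝ) : ℝ :=
  ∑ i, y i * Real.log (y i / p i)

/-- The prefix-constrained relaxed feasible region. -/
def prefixRegion {d : ℕ} (β : Fin d → ℝ) : Set (Fin d → ℝ) :=
  {y | (∀ i, 0 ≤ y i) ∧
    (∀ j : ℕ, j < d →
      ∑ i ∈ univ.filter (fun i : Fin d => (i : ℕ) < j), y i ≤
        ∑ i ∈ univ.filter (fun i : Fin d => (i : ℕ) < j), β i) ∧
    ∑ i, y i = 1}

private lemma prefix_succ_aux {d : ℕ} (f : Fin d → ℝ) (j : ℕ) (hj : j < d) :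
    ∑ k ∈ univ.filter (fun k : Fin d => (k : ℕ) < j + 1), f k
      = ∑ k ∈ univ.filter (fun k : Fin d => (k : ℕ) < j), f k + f ⟨j, hj⟩ := by
  have hins : univ.filter (fun k : Fin d => (k : ℕ) < j + 1)
      = insert ⟨j, hj⟩ (univ.filter (fun k : Fin d => (k : ℕ) < j)) := by
    ext k
    simp only [mem_filter, mem_univ, true_and, mem_insert, Fin.ext_iff]
    omega
  rw [hins, sum_insert (by simp)]
  ring

private lemma filter_lt_self {d : ℕ} :
    univ.filter (fun k : Fin d => (k : ℕ) < d) = (univ : Finset (Fin d)) :=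
  filter_true_of_mem fun k _ => k.isLt

private lemma split_log (x c : ℝ) (hc : 0 < c) :
    x * Real.log (x / c) = x * Real.log x - x * Real.log c := by
  rcases eq_or_ne x 0 with h | h
  · simp [h]
  · rw [Real.log_div h hc.ne', mul_sub]

private lemma key_ineq_s13 (a b q p' : ℝ) (ha : 0 ≤ a) (hab : a < b) (hq : 0 < q)
    (hqp : q ≤ p') :
    ((a + b) / 2) * Real.log (((a + b) / 2) / p')
      + ((a + b) / 2) * Real.log (((a + b) / 2) / q)
      < a * Real.log (a / p') + b * Real.log (b / q) := by
  have hp' : 0 < p' := lt_of_lt_of_le hq hqp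
  rw [split_log a p' hp', split_log b q hq, split_log _ _ hp', split_log _ _ hq]
  have hconv := Real.strictConvexOn_mul_log
  have h1 : ((a + b) / 2) * Real.log ((a + b) / 2)
      < (a * Real.log a + b * Real.log b) / 2 := by
    have := hconv.2 (Set.mem_Ici.2 ha) (Set.mem_Ici.2 (ha.trans hab.le)) hab.ne
      (by norm_num : (0:ℝ) < 1/2) (by norm_num : (0:ℝ) < 1/2) (by norm_num)
    simp only [smul_eq_mul] at this
    calc ((a + b) / 2) * Real.log ((a + b) / 2)
        = (1/2 * a + 1/2 * b) * Real.log (1/2 * a + 1/2 * b) := by ring_nf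
      _ < 1/2 * (a * Real.log a) + 1/2 * (b * Real.log b) := this
      _ = (a * Real.log a + b * Real.log b) / 2 := by ring
  have h2 : (b - a) * (Real.log q - Real.log p') ≤ 0 :=
    mul_nonpos_of_nonneg_of_nonpos (by linarith)
      (by simpa using sub_nonpos.2 (Real.log_le_log hq hqp))
  nlinarith [h1, h2]

private lemma sum_update_both {d : ℕ} (f : Fin d → ℝ) {I J : Fin d} (hIJ : I ≠ J)
    {S : Finset (Fin d)} (hI : I ∈ S) (hJ : J ∈ S) (m : ℝ) (hm : m + m = f I + f J) :
    ∑ k ∈ S, Function.update (Function.update f I m) J m k = ∑ k ∈ S, f k := by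
  have hJ' : I ∈ S \ {J} := Finset.mem_sdiff.2 ⟨hI, by simp [hIJ]⟩
  rw [Finset.sum_update_of_mem hJ, Finset.sum_update_of_mem hJ']
  have hsd : (S \ {J}) \ {I} = S \ {I, J} := by
    ext k
    simp only [Finset.mem_sdiff, Finset.mem_singleton, Finset.mem_insert]
    tauto
  rw [hsd]
  have hdecomp : ∑ k ∈ S, f k = f I + f J + ∑ k ∈ S \ {I, J}, f k := by
    rw [← Finset.sum_sdiff (show ({I, J} : Finset (Fin d)) ⊆ S from
      Finset.insert_subset hI (Finset.singleton_subset_iff.2 hJ)), Finset.sum_pair hIJ]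
    ring
  rw [hdecomp]
  linarith

theorem stmt13 {d : ℕ} (β p : Fin d → ℝ)
    (hβsort : Antitone β) (hβnn : ∀ i, 0 ≤ β i) (hβsum : ∑ i, β i = 1)
    (hpsort : Antitone p) (hppos : ∀ i, 0 < p i)
    (y : Fin d → ℝ) (hy : y ∈ prefixRegion β)
    (hmin : ∀ y' ∈ prefixRegion β, relEntropy y p ≤ relEntropy y' p) :
    Antitone y := by
  obtain ⟨hnn, hpre, hsum⟩ := hy
  cases d with
  | zero => intro a b _; exact a.elim0
  | succ n =>
  rw [Fin.antitone_iff_succ_le]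
  intro i
  by_contra hcon
  push_neg at hcon
  set I := i.castSucc with hIdef
  set J := i.succ with hJdef
  have hIJ : I ≠ J := by
    simp [hIdef, hJdef, Fin.ext_iff]
  have hIval : (I : ℕ) = i := rfl
  have hJval : (J : ℕ) = (i : ℕ) + 1 := rfl
  set a := y I with hadef
  set b := y J with hbdef
  set m := (a + b) / 2 with hmdef
  have hmsum : m + m = y I + y J := by rw [hmdef]; ring
  set y' := Function.update (Function.update y I m) J m with hy'def
  have hy'I : y' I = m := by
    rw [hy'def, Function.update_of_ne hIJ, Function.update_self]
  have hy'J : y' J = m := by rw [hy'def, Function.update_self]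
  have hy'other : ∀ k, k ≠ I → k ≠ J → y' k = y k := by
    intro k hkI hkJ
    rw [hy'def, Function.update_of_ne hkJ, Function.update_of_ne hkI]
  have hmnn : 0 ≤ m := by
    have := hnn I; have := hnn J; rw [hmdef]; linarith
  -- feasibility of y'
  have hfeas : y' ∈ prefixRegion β := by
    refine ⟨?_, ?_, ?_⟩
    · intro k
      rcases eq_or_ne k J with rfl | hkJ
      · rw [hy'J]; exact hmnn
      rcases eq_or_ne k I with rfl | hkI
      · rw [hy'I]; exact hmnn
      · rw [hy'other k hkI hkJ]; exact hnn k
    · intro j hj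
      rcases lt_trichotomy j ((i : ℕ) + 1) with hji | hji | hji
      · -- j ≤ i : no changed index in the prefix
        have : ∑ k ∈ univ.filter (fun k : Fin (n+1) => (k : ℕ) < j), y' k
            = ∑ k ∈ univ.filter (fun k : Fin (n+1) => (k : ℕ) < j), y k := by
          apply Finset.sum_congr rfl
          intro k hk
          simp only [mem_filter] at hk
          apply hy'other
          · intro h; rw [h] at hk; omega
          · intro h; rw [h] at hk; omega
        rw [this]; exact hpre j hj
      · -- j = i + 1 : the concavity step
        subst hji
        have hiv : (i : ℕ) < n + 1 := lt_of_le_of_lt (Nat.le_succ _) hj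
        have hIeq : (⟨(i : ℕ), hiv⟩ : Fin (n+1)) = I := by
          simp [Fin.ext_iff, hIval]
        have hJlt : (i : ℕ) + 1 < n + 1 := hj
        have hJeq : (⟨(i : ℕ) + 1, hJlt⟩ : Fin (n+1)) = J := by
          simp [Fin.ext_iff, hJval]
        have e1 := prefix_succ_aux y' (i : ℕ) hiv
        have e2 := prefix_succ_aux y (i : ℕ) hiv
        have e3 := prefix_succ_aux y ((i : ℕ) + 1) hJlt
        have e4 := prefix_succ_aux β (i : ℕ) hiv
        have e5 := prefix_succ_aux β ((i : ℕ) + 1) hJlt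
        rw [hIeq] at e1 e2 e4
        rw [hJeq] at e3 e5
        have epre : ∑ k ∈ univ.filter (fun k : Fin (n+1) => (k : ℕ) < (i : ℕ)), y' k
            = ∑ k ∈ univ.filter (fun k : Fin (n+1) => (k : ℕ) < (i : ℕ)), y k := by
          apply Finset.sum_congr rfl
          intro k hk
          simp only [mem_filter] at hk
          apply hy'other
          · intro h; rw [h] at hk; simp [hIval] at hk
          · intro h; rw [h] at hk; omega
        -- P (i+2) ≤ B (i+2)
        have hP2 : ∑ k ∈ univ.filter (fun k : Fin (n+1) => (k : ℕ) < (i : ℕ) + 1 + 1), y k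
            ≤ ∑ k ∈ univ.filter (fun k : Fin (n+1) => (k : ℕ) < (i : ℕ) + 1 + 1), β k := by
          rcases lt_or_eq_of_le (Nat.succ_le_of_lt hJlt) with h | h
          · exact hpre _ h
          · rw [show (i : ℕ) + 1 + 1 = n + 1 from h, filter_lt_self, hsum, hβsum]
        have hβmono : β J ≤ β I := hβsort (by
          simp [hIdef, hJdef, Fin.le_def])
        have hPi : ∑ k ∈ univ.filter (fun k : Fin (n+1) => (k : ℕ) < (i : ℕ)), y k
            ≤ ∑ k ∈ univ.filter (fun k : Fin (n+1) => (k : ℕ) < (i : ℕ)), β k :=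
          hpre _ (lt_trans (Nat.lt_succ_self _) hj)
        rw [e1, e4, epre, hy'I]
        rw [e3, e2, e5, e4] at hP2
        linarith
      · -- j ≥ i + 2 : both indices inside, sum unchanged
        have hIin : I ∈ univ.filter (fun k : Fin (n+1) => (k : ℕ) < j) := by
          simp only [mem_filter, mem_univ, true_and, hIval]; omega
        have hJin : J ∈ univ.filter (fun k : Fin (n+1) => (k : ℕ) < j) := by
          simp only [mem_filter, mem_univ, true_and, hJval]; omega
        rw [hy'def, sum_update_both y hIJ hIin hJin m hmsum]
        exact hpre j hj
    · rw [hy'def, sum_update_both y hIJ (mem_univ I) (mem_univ J) m hmsum]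
      exact hsum
  -- strict decrease of relative entropy
  have hlt : relEntropy y' p < relEntropy y p := by
    have hsplit : ∀ z : Fin (n+1) → ℝ,
        ∑ k, z k * Real.log (z k / p k)
          = ∑ k ∈ univ \ {I, J}, z k * Real.log (z k / p k)
            + (z I * Real.log (z I / p I) + z J * Real.log (z J / p J)) := by
      intro z
      rw [← Finset.sum_sdiff (Finset.subset_univ ({I, J} : Finset (Fin (n+1)))),
        Finset.sum_pair hIJ]
    unfold relEntropy
    rw [hsplit y', hsplit y]
    have hrest : ∑ k ∈ univ \ {I, J}, y' k * Real.log (y' k / p k)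
        = ∑ k ∈ univ \ {I, J}, y k * Real.log (y k / p k) := by
      apply Finset.sum_congr rfl
      intro k hk
      simp only [Finset.mem_sdiff, Finset.mem_insert, Finset.mem_singleton] at hk
      rw [hy'other k (fun h => hk.2 (Or.inl h)) (fun h => hk.2 (Or.inr h))]
    rw [hrest, hy'I, hy'J]
    have hkey := key_ineq_s13 a b (p J) (p I) (hnn I) hcon (hppos J)
      (hpsort (by simp [hIdef, hJdef, Fin.le_def]))
    rw [← hmdef] at hkey
    linarith
  have := hmin y' hfeas
  linarith
end

section
/- Let Y be the permutahedron of a sorted non-increasing β ∈ ℝ^d_{≥0} with ∑β_i = 1, and let Proj_Y(p) = argmin_{y∈Y} ∑_i y_i ln(y_i/p_i) denote the generalized relative entropy projection. Then for every ξ ≥ 1 and p, q ∈ ℝ^d_{>0} with q ≤ p ≤ ξ·q componentwise, Proj_Y(p) ≤ ξ · Proj_Y(q) componentwise. -/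
open Finset

attribute [local instance] Classical.propDecidable

namespace Stmt16Aux

variable {d : ℕ}

noncomputable def bnd (β : Fin d → ℝ) (k : ℕ) : ℝ :=
  ∑ i ∈ univ.filter (fun i : Fin d => (i : ℕ) < k), β i

lemma bnd_zero (β : Fin d → ℝ) : bnd β 0 = 0 := by simp [bnd]

lemma bnd_succ (β : Fin d → ℝ) {k : ℕ} (hk : k < d) :
    bnd β (k + 1) = bnd β k + β ⟨k, hk⟩ := by
  have h : univ.filter (fun i : Fin d => (i : ℕ) < k + 1)
      = insert ⟨k, hk⟩ (univ.filter (fun i : Fin d => (i : ℕ) < k)) := by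
    ext i
    simp only [mem_filter, mem_univ, true_and, mem_insert, Fin.ext_iff]
    omega
  rw [bnd, h, sum_insert (by simp), bnd]
  ring

lemma bnd_mono (β : Fin d → ℝ) (hβnn : ∀ i, 0 ≤ β i) {k l : ℕ} (hkl : k ≤ l) :
    bnd β k ≤ bnd β l := by
  apply sum_le_sum_of_subset_of_nonneg
  · intro i hi
    simp only [mem_filter, mem_univ, true_and] at hi ⊢
    omega
  · intro i _ _; exact hβnn i

lemma bnd_univ (β : Fin d → ℝ) : bnd β d = ∑ i, β i := by
  apply sum_congr _ (fun _ _ => rfl)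
  ext i; simp [i.isLt]

lemma bnd_step (β : Fin d → ℝ) (hsort : Antitone β) {a c : ℕ} (hac : a ≤ c) (hc : c < d) :
    bnd β a + bnd β (c + 1) ≤ bnd β (a + 1) + bnd β c := by
  have ha : a < d := lt_of_le_of_lt hac hc
  rw [bnd_succ β hc, bnd_succ β ha]
  have : β ⟨c, hc⟩ ≤ β ⟨a, ha⟩ := hsort (by simpa [Fin.le_def] using hac)
  linarith

lemma bnd_submod_aux (β : Fin d → ℝ) (hsort : Antitone β) :
    ∀ δ s t : ℕ, δ ≤ s → s ≤ t → t + δ ≤ d →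
      bnd β (s - δ) + bnd β (t + δ) ≤ bnd β s + bnd β t := by
  intro δ
  induction δ with
  | zero => intro s t _ _ _; simp
  | succ δ ih =>
    intro s t hδs hst htd
    have h1 : bnd β (s - (δ + 1)) + bnd β (t + (δ + 1)) ≤ bnd β (s - δ) + bnd β (t + δ) := by
      have hkey := bnd_step β hsort (a := s - (δ + 1)) (c := t + δ) (by omega) (by omega)
      have e1 : s - (δ + 1) + 1 = s - δ := by omega
      have e2 : t + δ + 1 = t + (δ + 1) := by omega
      rw [e1, e2] at hkey
      exact hkey
    have h2 := ih s t (by omega) hst (by omega)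
    linarith

lemma bnd_submod (β : Fin d → ℝ) (hsort : Antitone β) (S T : Finset (Fin d)) :
    bnd β (S ∩ T).card + bnd β (S ∪ T).card ≤ bnd β S.card + bnd β T.card := by
  have hcards : (S ∩ T).card + (S ∪ T).card = S.card + T.card :=
    card_inter_add_card_union S T
  have hUd : (S ∪ T).card ≤ d := by
    simpa using card_le_card (subset_univ (S ∪ T))
  rcases le_total S.card T.card with h | h
  · have hiS : (S ∩ T).card ≤ S.card := card_le_card inter_subset_left
    have := bnd_submod_aux β hsort (S.card - (S ∩ T).card) S.card T.card (by omega)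
      h (by omega)
    have e1 : S.card - (S.card - (S ∩ T).card) = (S ∩ T).card := by omega
    have e2 : T.card + (S.card - (S ∩ T).card) = (S ∪ T).card := by omega
    rw [e1, e2] at this
    linarith
  · have hiT : (S ∩ T).card ≤ T.card := card_le_card inter_subset_right
    have := bnd_submod_aux β hsort (T.card - (S ∩ T).card) T.card S.card (by omega)
      h (by omega)
    have e1 : T.card - (T.card - (S ∩ T).card) = (S ∩ T).card := by omega
    have e2 : S.card + (T.card - (S ∩ T).card) = (S ∪ T).card := by omega
    rw [e1, e2] at this
    linarith

def Feas (β : Fin d → ℝ) : Set (Fin d → ℝ) :=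
  {x | (∀ i, 0 ≤ x i) ∧ (∀ S : Finset (Fin d), ∑ i ∈ S, x i ≤ bnd β S.card) ∧ ∑ i, x i = 1}

lemma card_le_of_maxval {T : Finset (Fin d)} {m : ℕ} (h : ∀ i ∈ T, (i : ℕ) ≤ m) :
    T.card ≤ m + 1 := by
  have h1 : T.card = (T.image (Fin.val)).card :=
    (card_image_of_injective _ Fin.val_injective).symm
  rw [h1]
  have h2 : T.image (Fin.val) ⊆ Finset.range (m + 1) := by
    intro n hn
    simp only [mem_image] at hn
    obtain ⟨i, hi, rfl⟩ := hn
    simp [Nat.lt_succ_iff, h i hi]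
  simpa using card_le_card h2

lemma sum_le_bnd (β : Fin d → ℝ) (hsort : Antitone β) (T : Finset (Fin d)) :
    ∑ i ∈ T, β i ≤ bnd β T.card := by
  obtain ⟨n, hT⟩ : ∃ n, T.card = n := ⟨_, rfl⟩
  induction n generalizing T with
  | zero =>
    rw [hT, card_eq_zero.mp hT]
    simp [bnd_zero]
  | succ n ih =>
    have hne : T.Nonempty := card_pos.mp (by omega)
    set t := T.max' hne with ht
    have htT : t ∈ T := T.max'_mem hne
    have hcard : T.card ≤ (t : ℕ) + 1 := card_le_of_maxval (fun i hi => T.le_max' i hi)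
    have hnt : n ≤ (t : ℕ) := by omega
    have hnd : n < d := lt_of_le_of_lt hnt t.isLt
    have hsum : ∑ i ∈ T, β i = β t + ∑ i ∈ T.erase t, β i :=
      (Finset.add_sum_erase T β htT).symm
    have hcarde : (T.erase t).card = n := by
      rw [card_erase_of_mem htT]; omega
    have hih := ih (T.erase t) hcarde
    have hβt : β t ≤ β ⟨n, hnd⟩ := hsort (by simpa [Fin.le_def] using hnt)
    rw [hcarde] at hih
    rw [hsum, hT, bnd_succ β hnd]
    linarith

lemma perm_mem_Feas (β : Fin d → ℝ) (hsort : Antitone β) (hβnn : ∀ i, 0 ≤ β i)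
    (hsum : ∑ i, β i = 1) (σ : Equiv.Perm (Fin d)) : (β ∘ σ) ∈ Feas β := by
  refine ⟨fun i => hβnn _, fun S => ?_, ?_⟩
  · have h1 : ∑ i ∈ S, β (σ i) = ∑ j ∈ S.image σ, β j :=
      (sum_image (fun a _ b _ h => σ.injective h)).symm
    have h2 : (S.image σ).card = S.card := card_image_of_injective _ σ.injective
    calc ∑ i ∈ S, (β ∘ σ) i = ∑ j ∈ S.image σ, β j := h1
      _ ≤ bnd β (S.image σ).card := sum_le_bnd β hsort _
      _ = bnd β S.card := by rw [h2]
  · calc ∑ i, (β ∘ σ) i = ∑ i, β i := Equiv.sum_comp σ β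
      _ = 1 := hsum

lemma convex_Feas (β : Fin d → ℝ) : Convex ℝ (Feas β) := by
  intro x hx y hy a b ha hb hab
  refine ⟨fun i => ?_, fun S => ?_, ?_⟩
  · have := hx.1 i; have := hy.1 i
    simp only [Pi.add_apply, Pi.smul_apply, smul_eq_mul]
    nlinarith
  · have h1 : ∑ i ∈ S, (a • x + b • y) i = a * ∑ i ∈ S, x i + b * ∑ i ∈ S, y i := by
      simp only [Pi.add_apply, Pi.smul_apply, smul_eq_mul]
      rw [Finset.sum_add_distrib, Finset.mul_sum, Finset.mul_sum]
    rw [h1]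
    have h2 := mul_le_mul_of_nonneg_left (hx.2.1 S) ha
    have h3 := mul_le_mul_of_nonneg_left (hy.2.1 S) hb
    have h4 : a * bnd β S.card + b * bnd β S.card = bnd β S.card := by
      rw [← add_mul, hab, one_mul]
    linarith
  · have h1 : ∑ i, (a • x + b • y) i = a * ∑ i, x i + b * ∑ i, y i := by
      simp only [Pi.add_apply, Pi.smul_apply, smul_eq_mul]
      rw [Finset.sum_add_distrib, Finset.mul_sum, Finset.mul_sum]
    rw [h1, hx.2.2, hy.2.2]
    linarith

end Stmt16Aux
namespace Stmt16Aux

variable {d : ℕ}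

def Tight (β : Fin d → ℝ) (x : Fin d → ℝ) (S : Finset (Fin d)) : Prop :=
  ∑ i ∈ S, x i = bnd β S.card

lemma tight_empty (β x : Fin d → ℝ) : Tight β x ∅ := by
  simp [Tight, bnd_zero]

lemma tight_univ (β : Fin d → ℝ) (hsum : ∑ i, β i = 1) {x : Fin d → ℝ}
    (hx : x ∈ Feas β) : Tight β x univ := by
  unfold Tight
  rw [hx.2.2, card_univ, Fintype.card_fin, bnd_univ, hsum]

lemma tight_inter_union (β : Fin d → ℝ) (hsort : Antitone β) {x : Fin d → ℝ}
    (hx : x ∈ Feas β) {S T : Finset (Fin d)} (hS : Tight β x S) (hT : Tight β x T) :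
    Tight β x (S ∩ T) ∧ Tight β x (S ∪ T) := by
  have h1 : ∑ i ∈ S ∪ T, x i + ∑ i ∈ S ∩ T, x i = ∑ i ∈ S, x i + ∑ i ∈ T, x i :=
    sum_union_inter
  have h2 := hx.2.1 (S ∪ T)
  have h3 := hx.2.1 (S ∩ T)
  have h4 := bnd_submod β hsort S T
  unfold Tight at hS hT ⊢
  constructor <;> linarith

lemma tight_sup (β : Fin d → ℝ) (hsort : Antitone β) {x : Fin d → ℝ} (hx : x ∈ Feas β)
    (𝒮 : Finset (Finset (Fin d))) (h : ∀ S ∈ 𝒮, Tight β x S) :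
    Tight β x (𝒮.sup id) := by
  induction 𝒮 using Finset.cons_induction with
  | empty => simpa using tight_empty β x
  | cons S 𝒮' hS ih =>
    rw [Finset.sup_cons]
    have h1 : Tight β x S := h S (mem_cons_self _ _)
    have h2 : Tight β x (𝒮'.sup id) := ih (fun T hT => h T (mem_cons.mpr (Or.inr hT)))
    have := (tight_inter_union β hsort hx h1 h2).2
    simpa [sup_eq_union] using this

lemma tight_inf' (β : Fin d → ℝ) (hsort : Antitone β) {x : Fin d → ℝ} (hx : x ∈ Feas β)
    {J : Finset (Fin d)} (hJ : J.Nonempty) (F : Fin d → Finset (Fin d))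
    (h : ∀ j ∈ J, Tight β x (F j)) : Tight β x (J.inf' hJ F) := by
  induction hJ using Finset.Nonempty.cons_induction with
  | singleton j => simpa using h j (mem_singleton_self j)
  | cons j J' hj hJ' ih =>
    rw [Finset.inf'_cons]
    have h1 : Tight β x (F j) := h j (mem_cons_self _ _)
    have h2 : Tight β x (J'.inf' hJ' F) := ih (fun k hk => h k (mem_cons.mpr (Or.inr hk)))
    have := (tight_inter_union β hsort hx h1 h2).1
    simpa [inf_eq_inter] using this

/-- Direction: decrease coordinate `a`, increase coordinate `b`. -/
def dir (a b : Fin d) : Fin d → ℝ :=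
  fun k => (if k = b then (1 : ℝ) else 0) - (if k = a then (1 : ℝ) else 0)

lemma dir_sum (a b : Fin d) (S : Finset (Fin d)) :
    ∑ k ∈ S, dir a b k = (if b ∈ S then (1 : ℝ) else 0) - (if a ∈ S then (1 : ℝ) else 0) := by
  unfold dir
  rw [Finset.sum_sub_distrib]
  congr 1 <;> simp [Finset.sum_ite_eq']

lemma pert_mem (β : Fin d → ℝ) {x : Fin d → ℝ} (hx : x ∈ Feas β) {a b : Fin d}
    (hba : b ≠ a) (hxa : 0 < x a)
    (hsep : ∀ S : Finset (Fin d), Tight β x S → b ∈ S → a ∈ S) :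
    ∃ ε : ℝ, 0 < ε ∧ x + ε • dir a b ∈ Feas β := by
  set 𝒜 : Finset (Finset (Fin d)) :=
    univ.filter (fun S : Finset (Fin d) => b ∈ S ∧ a ∉ S) with h𝒜
  have h𝒜ne : 𝒜.Nonempty := ⟨{b}, by simp [h𝒜, hba.symm, Finset.mem_singleton]⟩
  set slack : Finset (Fin d) → ℝ := fun S => bnd β S.card - ∑ i ∈ S, x i with hslack
  set ε : ℝ := min (x a) (𝒜.inf' h𝒜ne slack) with hε
  have hslackpos : ∀ S ∈ 𝒜, 0 < slack S := by
    intro S hS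
    rw [h𝒜, mem_filter] at hS
    have hnt : ¬ Tight β x S := fun ht => hS.2.2 (hsep S ht hS.2.1)
    have := hx.2.1 S
    have : ∑ i ∈ S, x i < bnd β S.card := lt_of_le_of_ne this hnt
    simp only [hslack]; linarith
  have hεpos : 0 < ε := by
    rw [hε]
    apply lt_min hxa
    rw [Finset.lt_inf'_iff]
    exact hslackpos
  refine ⟨ε, hεpos, ?_⟩
  refine ⟨fun k => ?_, fun S => ?_, ?_⟩
  · have h1 : ε ≤ x a := min_le_left _ _
    have h2 := hx.1 k
    simp only [Pi.add_apply, Pi.smul_apply, smul_eq_mul, dir]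
    by_cases hka : k = a
    · have hkb : k ≠ b := by rw [hka]; exact fun h => hba h.symm
      rw [if_neg hkb, if_pos hka, hka]
      linarith
    · by_cases hkb : k = b
      · rw [if_pos hkb, if_neg hka]; linarith
      · rw [if_neg hkb, if_neg hka]; linarith
  · have hsplit : ∑ i ∈ S, (x + ε • dir a b) i
        = ∑ i ∈ S, x i + ε * ((if b ∈ S then (1:ℝ) else 0) - (if a ∈ S then (1:ℝ) else 0)) := by
      simp only [Pi.add_apply, Pi.smul_apply, smul_eq_mul]
      rw [Finset.sum_add_distrib, ← Finset.mul_sum, dir_sum]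
    rw [hsplit]
    by_cases hbS : b ∈ S
    · by_cases haS : a ∈ S
      · simp only [hbS, haS, if_true]
        have := hx.2.1 S; linarith
      · have hS𝒜 : S ∈ 𝒜 := by simp [h𝒜, hbS, haS]
        have hle : ε ≤ slack S := le_trans (min_le_right _ _) (Finset.inf'_le _ hS𝒜)
        simp only [hbS, haS, if_true, if_false]
        simp only [hslack] at hle
        linarith
    · by_cases haS : a ∈ S
      · simp only [hbS, haS, if_true, if_false]
        have := hx.2.1 S; linarith
      · simp only [hbS, haS, if_false]
        have := hx.2.1 S; linarith
  · have hsplit : ∑ i, (x + ε • dir a b) i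
        = ∑ i, x i + ε * ((if b ∈ univ then (1:ℝ) else 0) - (if a ∈ univ then (1:ℝ) else 0)) := by
      simp only [Pi.add_apply, Pi.smul_apply, smul_eq_mul]
      rw [Finset.sum_add_distrib, ← Finset.mul_sum, dir_sum]
    rw [hsplit, hx.2.2]
    simp

lemma exchange (β : Fin d → ℝ) (hsort : Antitone β) {y z : Fin d → ℝ}
    (hy : y ∈ Feas β) (hz : z ∈ Feas β) {i : Fin d} (hi : z i < y i) :
    ∃ j, j ≠ i ∧ y j < z j ∧ (∀ S, Tight β y S → j ∈ S → i ∈ S) ∧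
      (∀ S, Tight β z S → i ∈ S → j ∈ S) := by
  set U : Finset (Fin d) :=
    (univ.filter (fun S : Finset (Fin d) => Tight β y S ∧ i ∉ S)).sup id with hU
  have hUtight : Tight β y U := by
    apply tight_sup β hsort hy
    intro S hS
    exact (mem_filter.mp hS).2.1
  have hiU : i ∉ U := by
    rw [hU]
    intro hmem
    rw [Finset.mem_sup] at hmem
    obtain ⟨S, hS, hiS⟩ := hmem
    exact (mem_filter.mp hS).2.2 hiS
  have hUprop : ∀ S, Tight β y S → i ∉ S → S ⊆ U := by
    intro S hS hiS
    rw [hU]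
    exact Finset.le_sup (f := id) (mem_filter.mpr ⟨mem_univ S, hS, hiS⟩)
  have hycond : ∀ j, j ∉ U → ∀ S, Tight β y S → j ∈ S → i ∈ S := by
    intro j hjU S hS hjS
    by_contra hiS
    exact hjU (hUprop S hS hiS hjS)
  set J : Finset (Fin d) := univ.filter (fun j => j ∉ U ∧ y j < z j) with hJ
  -- the sums over U and its complement
  have hcomplsum : ∀ w : Fin d → ℝ, ∑ k ∈ univ \ U, w k + ∑ k ∈ U, w k = ∑ k, w k :=
    fun w => Finset.sum_sdiff (subset_univ U)
  have hUz : ∑ k ∈ U, z k ≤ ∑ k ∈ U, y k := by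
    have h1 := hz.2.1 U
    have h2 : ∑ k ∈ U, y k = bnd β U.card := hUtight
    linarith
  have hicompl : i ∈ univ \ U := by simp [hiU]
  have hJne : J.Nonempty := by
    by_contra hJe
    rw [Finset.not_nonempty_iff_eq_empty] at hJe
    have hptwise : ∀ k ∈ univ \ U, z k ≤ y k := by
      intro k hk
      rcases eq_or_ne k i with rfl | hki
      · exact le_of_lt hi
      · simp only [mem_sdiff, mem_univ, true_and] at hk
        by_contra hlt
        push_neg at hlt
        have : k ∈ J := by simp [hJ, hk, hlt]
        rw [hJe] at this
        exact absurd this (Finset.notMem_empty k)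
    have hstrict : ∑ k ∈ univ \ U, z k < ∑ k ∈ univ \ U, y k :=
      Finset.sum_lt_sum hptwise ⟨i, hicompl, hi⟩
    have h1 := hcomplsum z
    have h2 := hcomplsum y
    rw [hz.2.2] at h1
    rw [hy.2.2] at h2
    linarith
  -- suppose no j in J works for the z-side
  by_contra hcon
  push_neg at hcon
  have hfail : ∀ j ∈ J, ∃ S, Tight β z S ∧ i ∈ S ∧ j ∉ S := by
    intro j hj
    rw [hJ, mem_filter] at hj
    have hji : j ≠ i := fun h => by rw [h] at hj; linarith [hj.2.2]
    have := hcon j hji hj.2.2 (hycond j hj.2.1)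
    obtain ⟨S, hS1, hS2, hS3⟩ := this
    exact ⟨S, hS1, hS2, hS3⟩
  classical
  choose! F hF1 hF2 hF3 using hfail
  set S : Finset (Fin d) := J.inf' hJne F with hS
  have hStight : Tight β z S := tight_inf' β hsort hz hJne F (fun j hj => hF1 j hj)
  have hiS : i ∈ S := by
    rw [hS, Finset.mem_inf']
    exact fun j hj => hF2 j hj
  have hSJ : ∀ j ∈ J, j ∉ S := by
    intro j hj hjS
    rw [hS, Finset.mem_inf'] at hjS
    exact hF3 j hj (hjS j hj)
  set T : Finset (Fin d) := S \ U with hT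
  have hiT : i ∈ T := by simp [hT, hiS, hiU]
  have hTz : ∀ k ∈ T, k ≠ i → z k ≤ y k := by
    intro k hk hki
    simp only [hT, mem_sdiff] at hk
    by_contra hlt
    push_neg at hlt
    have hkJ : k ∈ J := by simp [hJ, hk.2, hlt]
    exact hSJ k hkJ hk.1
  have hstrict : ∑ k ∈ T, z k < ∑ k ∈ T, y k := by
    apply Finset.sum_lt_sum
    · intro k hk
      rcases eq_or_ne k i with rfl | hki
      · exact le_of_lt hi
      · exact hTz k hk hki
    · exact ⟨i, hiT, hi⟩
  -- now the reverse inequality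
  have e1 : ∑ k ∈ U ∪ S, y k + ∑ k ∈ U ∩ S, y k = ∑ k ∈ U, y k + ∑ k ∈ S, y k :=
    sum_union_inter
  have e2 : ∑ k ∈ U ∪ S, y k ≤ bnd β (U ∪ S).card := hy.2.1 _
  have e3 : ∑ k ∈ U ∩ S, z k ≤ bnd β (U ∩ S).card := hz.2.1 _
  have e4 : bnd β (U ∩ S).card + bnd β (U ∪ S).card ≤ bnd β U.card + bnd β S.card :=
    bnd_submod β hsort U S
  have e5 : ∑ k ∈ U, y k = bnd β U.card := hUtight
  have e6 : ∑ k ∈ S, z k = bnd β S.card := hStight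
  have e7 : ∑ k ∈ U ∪ S, y k = ∑ k ∈ U, y k + ∑ k ∈ S \ U, y k := by
    rw [← Finset.sum_union Finset.disjoint_sdiff, Finset.union_sdiff_self_eq_union]
  have e8 : ∑ k ∈ S, z k = ∑ k ∈ S ∩ U, z k + ∑ k ∈ S \ U, z k :=
    (Finset.sum_inter_add_sum_sdiff S U z).symm
  have e9 : ∑ k ∈ S ∩ U, z k = ∑ k ∈ U ∩ S, z k := by rw [Finset.inter_comm]
  have e10 : ∑ k ∈ S, y k = ∑ k ∈ S ∩ U, y k + ∑ k ∈ S \ U, y k :=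
    (Finset.sum_inter_add_sum_sdiff S U y).symm
  rw [hT] at hstrict
  linarith

end Stmt16Aux
namespace Stmt16Aux

variable {d : ℕ}

def blockF (k l : ℕ) : Finset (Fin d) :=
  univ.filter (fun i : Fin d => k ≤ (i : ℕ) ∧ (i : ℕ) < l)

lemma blockF_eq_sdiff (k l : ℕ) (hkl : k ≤ l) :
    (blockF k l : Finset (Fin d)) =
      (univ.filter (fun i : Fin d => (i : ℕ) < l)) \ (univ.filter (fun i : Fin d => (i : ℕ) < k)) := by
  ext i
  simp only [blockF, mem_filter, mem_sdiff, mem_univ, true_and]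
  omega

lemma sum_blockF (β : Fin d → ℝ) {k l : ℕ} (hkl : k ≤ l) :
    ∑ i ∈ (blockF k l : Finset (Fin d)), β i = bnd β l - bnd β k := by
  have hsub : (univ.filter (fun i : Fin d => (i : ℕ) < k))
      ⊆ (univ.filter (fun i : Fin d => (i : ℕ) < l)) := by
    intro i hi
    simp only [mem_filter, mem_univ, true_and] at hi ⊢
    omega
  have := Finset.sum_sdiff (f := β) hsub
  rw [blockF_eq_sdiff k l hkl]
  unfold bnd
  linarith

lemma card_blockF {k l : ℕ} (hkl : k ≤ l) (hld : l ≤ d) :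
    (blockF k l : Finset (Fin d)).card = l - k := by
  have : (blockF k l : Finset (Fin d)).card = (Finset.Ico k l).card := by
    refine Finset.card_bij (fun i _ => (i : ℕ)) ?_ ?_ ?_
    · intro a ha
      simp only [blockF, mem_filter, mem_univ, true_and] at ha
      simp [Finset.mem_Ico, ha.1, ha.2]
    · intro a _ b _ h
      exact Fin.val_injective h
    · intro n hn
      simp only [Finset.mem_Ico] at hn
      have hnd : n < d := lt_of_lt_of_le hn.2 hld
      exact ⟨⟨n, hnd⟩, by simp [blockF, hn.1, hn.2], rfl⟩
  rw [this, Nat.card_Ico]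

lemma chain_step (β : Fin d → ℝ) (hsort : Antitone β) (hβnn : ∀ i, 0 ≤ β i)
    (hsum : ∑ i, β i = 1) {x : Fin d → ℝ} (hx : x ∈ Feas β)
    (hsep : ∀ a b : Fin d, a ≠ b → 0 < x a → 0 < x b →
      ∃ S, Tight β x S ∧ ((a ∈ S ∧ b ∉ S) ∨ (b ∈ S ∧ a ∉ S)))
    {S : Finset (Fin d)} (hS : Tight β x S) (hSu : S ≠ univ) :
    ∃ T, Tight β x T ∧ S ⊂ T ∧
      Multiset.map x (T \ S).val = Multiset.map β (blockF S.card T.card).val := by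
  set ℋ : Finset (Finset (Fin d)) :=
    univ.filter (fun T : Finset (Fin d) => Tight β x T ∧ S ⊂ T) with hℋ
  have hSu' : S ⊂ univ := Finset.ssubset_univ_iff.mpr hSu
  have hℋne : ℋ.Nonempty :=
    ⟨univ, by simp [hℋ, tight_univ β hsum hx, hSu']⟩
  obtain ⟨T, hTmem, hTmin⟩ := Finset.exists_min_image ℋ card hℋne
  rw [hℋ, mem_filter] at hTmem
  obtain ⟨-, hTtight, hSsubT⟩ := hTmem
  set D : Finset (Fin d) := T \ S with hD
  have hsubST : S ⊆ T := hSsubT.1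
  have hDne : D.Nonempty := by
    obtain ⟨a, haT, haS⟩ := Finset.exists_of_ssubset hSsubT
    exact ⟨a, by simp [hD, haT, haS]⟩
  have hclass : ∀ R, Tight β x R → R ∩ D = ∅ ∨ D ⊆ R := by
    intro R hR
    by_contra hcontra
    push_neg at hcontra
    obtain ⟨hRD, hDR⟩ := hcontra
    obtain ⟨a, haRD⟩ := hRD
    obtain ⟨b, hbD, hbR⟩ := Finset.not_subset.mp hDR
    rw [Finset.mem_inter] at haRD
    have haD := haRD.2
    have hRT : Tight β x (R ∩ T) := (tight_inter_union β hsort hx hR hTtight).1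
    have hM : Tight β x ((R ∩ T) ∪ S) := (tight_inter_union β hsort hx hRT hS).2
    have haT : a ∈ T := (Finset.mem_sdiff.mp (hD ▸ haD : a ∈ T \ S)).1
    have haS : a ∉ S := (Finset.mem_sdiff.mp (hD ▸ haD : a ∈ T \ S)).2
    have hbT : b ∈ T := (Finset.mem_sdiff.mp (hD ▸ hbD : b ∈ T \ S)).1
    have hbS : b ∉ S := (Finset.mem_sdiff.mp (hD ▸ hbD : b ∈ T \ S)).2
    have hMsubT : (R ∩ T) ∪ S ⊆ T := by
      intro c hc
      rcases Finset.mem_union.mp hc with h | h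
      · exact (Finset.mem_inter.mp h).2
      · exact hsubST h
    have hSsubM : S ⊂ (R ∩ T) ∪ S := by
      constructor
      · exact Finset.subset_union_right
      · intro hsub
        exact haS (by
          have : a ∈ (R ∩ T) ∪ S := Finset.mem_union_left _ (Finset.mem_inter.mpr ⟨haRD.1, haT⟩)
          exact hsub this)
    have hMne : (R ∩ T) ∪ S ≠ T := by
      intro h
      rw [← h] at hbT
      rcases Finset.mem_union.mp hbT with hmem | hmem
      · exact hbR (Finset.mem_inter.mp hmem).1
      · exact hbS hmem
    have hMcard : ((R ∩ T) ∪ S).card < T.card :=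
      Finset.card_lt_card (lt_iff_le_and_ne.mpr ⟨hMsubT, hMne⟩)
    have hMmem : (R ∩ T) ∪ S ∈ ℋ := by
      rw [hℋ, mem_filter]
      exact ⟨mem_univ _, hM, hSsubM⟩
    exact absurd (hTmin _ hMmem) (by omega)
  have hTd : T.card ≤ d := by simpa using card_le_card (subset_univ T)
  have hST : S.card < T.card := Finset.card_lt_card hSsubT
  have hsumD : ∑ k ∈ D, x k = bnd β T.card - bnd β S.card := by
    have := Finset.sum_sdiff (f := x) hsubST
    have h1 : ∑ k ∈ S, x k = bnd β S.card := hS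
    have h2 : ∑ k ∈ T, x k = bnd β T.card := hTtight
    rw [hD]
    linarith
  have hcardD : D.card = T.card - S.card := Finset.card_sdiff_of_subset hsubST
  have hcardB : (blockF S.card T.card : Finset (Fin d)).card = T.card - S.card :=
    card_blockF (le_of_lt hST) hTd
  have hsumB : ∑ i ∈ (blockF S.card T.card : Finset (Fin d)), β i
      = bnd β T.card - bnd β S.card := sum_blockF β (le_of_lt hST)
  have hScd : S.card < d := lt_of_lt_of_le hST hTd
  set i0 : Fin d := ⟨S.card, hScd⟩ with hi0
  have hi0B : i0 ∈ (blockF S.card T.card : Finset (Fin d)) := by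
    simp [blockF, hi0, hST]
  by_cases hpos : ∃ a ∈ D, 0 < x a
  · obtain ⟨a, haD, hxa⟩ := hpos
    have hrest : ∀ b ∈ D, b ≠ a → x b = 0 := by
      intro b hbD hba
      rcases lt_or_eq_of_le (hx.1 b) with hlt | heq
      · obtain ⟨R, hR, hcase⟩ := hsep b a hba hlt hxa
        rcases hclass R hR with hRD | hDR
        · rcases hcase with ⟨hbR, _⟩ | ⟨haR, _⟩
          · exact absurd (Finset.mem_inter.mpr ⟨hbR, hbD⟩) (by simp [hRD])
          · exact absurd (Finset.mem_inter.mpr ⟨haR, haD⟩) (by simp [hRD])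
        · rcases hcase with ⟨_, haR⟩ | ⟨_, hbR⟩
          · exact absurd (hDR haD) haR
          · exact absurd (hDR hbD) hbR
      · exact heq.symm
    have hsumrest : ∑ k ∈ D.erase a, x k = 0 :=
      Finset.sum_eq_zero (fun b hb =>
        hrest b (Finset.mem_of_mem_erase hb) (Finset.ne_of_mem_erase hb))
    have hxaval : x a = bnd β T.card - bnd β S.card := by
      have := (Finset.add_sum_erase D x haD).symm
      rw [hsumrest] at this
      rw [← hsumD]
      linarith
    -- singleton constraint: x a ≤ β i0
    have haS : a ∉ S := (Finset.mem_sdiff.mp (hD ▸ haD : a ∈ T \ S)).2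
    have hins := hx.2.1 (insert a S)
    rw [Finset.sum_insert haS, Finset.card_insert_of_notMem haS] at hins
    rw [bnd_succ β hScd] at hins
    have hxaβ : x a ≤ β i0 := by
      have h1 : ∑ k ∈ S, x k = bnd β S.card := hS
      rw [hi0]
      linarith
    -- conclude the block β values
    have hsum_erase : ∑ i ∈ (blockF S.card T.card : Finset (Fin d)).erase i0, β i
        = x a - β i0 := by
      have := (Finset.add_sum_erase (blockF S.card T.card) β hi0B).symm
      rw [hsumB] at this
      rw [hxaval]
      linarith
    have herasenn : ∀ i ∈ (blockF S.card T.card : Finset (Fin d)).erase i0, 0 ≤ β i :=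
      fun i _ => hβnn i
    have hle0 : ∑ i ∈ (blockF S.card T.card : Finset (Fin d)).erase i0, β i ≤ 0 := by
      rw [hsum_erase]; linarith
    have herase0 : ∀ i ∈ (blockF S.card T.card : Finset (Fin d)).erase i0, β i = 0 := by
      have hge : 0 ≤ ∑ i ∈ (blockF S.card T.card : Finset (Fin d)).erase i0, β i :=
        Finset.sum_nonneg herasenn
      have heq0 : ∑ i ∈ (blockF S.card T.card : Finset (Fin d)).erase i0, β i = 0 :=
        le_antisymm hle0 hge
      exact (Finset.sum_eq_zero_iff_of_nonneg herasenn).mp heq0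
    have hβi0 : β i0 = x a := by
      have := hsum_erase
      rw [(Finset.sum_eq_zero herase0 : _)] at this
      linarith
    -- multiset computation
    have haDval : a ∈ D.val := haD
    have hDval : D.val = a ::ₘ (D.erase a).val := by
      rw [Finset.erase_val]
      exact (Multiset.cons_erase haDval).symm
    have hBval : (blockF S.card T.card : Finset (Fin d)).val
        = i0 ::ₘ ((blockF S.card T.card : Finset (Fin d)).erase i0).val := by
      rw [Finset.erase_val]
      exact (Multiset.cons_erase (show i0 ∈ (blockF S.card T.card : Finset (Fin d)).val from hi0B)).symm
    refine ⟨T, hTtight, hSsubT, ?_⟩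
    rw [← hD, hDval, hBval, Multiset.map_cons, Multiset.map_cons, hβi0]
    congr 1
    have h1 : Multiset.map x (D.erase a).val = Multiset.replicate (D.card - 1) 0 := by
      rw [Multiset.eq_replicate]
      constructor
      · rw [Multiset.card_map]
        have : (D.erase a).val.card = (D.erase a).card := rfl
        rw [this, Finset.card_erase_of_mem haD]
      · intro b hb
        rw [Multiset.mem_map] at hb
        obtain ⟨c, hc, rfl⟩ := hb
        exact hrest c (Finset.mem_of_mem_erase hc) (Finset.ne_of_mem_erase hc)
    have h2 : Multiset.map β ((blockF S.card T.card : Finset (Fin d)).erase i0).val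
        = Multiset.replicate ((blockF S.card T.card : Finset (Fin d)).card - 1) 0 := by
      rw [Multiset.eq_replicate]
      constructor
      · rw [Multiset.card_map]
        have : ((blockF S.card T.card : Finset (Fin d)).erase i0).val.card
            = ((blockF S.card T.card : Finset (Fin d)).erase i0).card := rfl
        rw [this, Finset.card_erase_of_mem hi0B]
      · intro b hb
        rw [Multiset.mem_map] at hb
        obtain ⟨c, hc, rfl⟩ := hb
        exact herase0 c hc
    rw [h1, h2, hcardD, hcardB]
  · push_neg at hpos
    have hall0 : ∀ a ∈ D, x a = 0 := fun a ha => le_antisymm (hpos a ha) (hx.1 a)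
    have hsum0 : ∑ k ∈ D, x k = 0 := Finset.sum_eq_zero hall0
    have hbndeq : bnd β T.card = bnd β S.card := by
      rw [hsum0] at hsumD; linarith
    have hβ0 : ∀ i ∈ (blockF S.card T.card : Finset (Fin d)), β i = 0 := by
      have heq0 : ∑ i ∈ (blockF S.card T.card : Finset (Fin d)), β i = 0 := by
        rw [hsumB, hbndeq]; ring
      exact (Finset.sum_eq_zero_iff_of_nonneg (fun i _ => hβnn i)).mp heq0
    refine ⟨T, hTtight, hSsubT, ?_⟩
    rw [← hD]
    have h1 : Multiset.map x D.val = Multiset.replicate D.card 0 := by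
      rw [Multiset.eq_replicate]
      refine ⟨by rw [Multiset.card_map]; rfl, ?_⟩
      intro b hb
      rw [Multiset.mem_map] at hb
      obtain ⟨c, hc, rfl⟩ := hb
      exact hall0 c hc
    have h2 : Multiset.map β (blockF S.card T.card : Finset (Fin d)).val
        = Multiset.replicate (blockF S.card T.card : Finset (Fin d)).card 0 := by
      rw [Multiset.eq_replicate]
      refine ⟨by rw [Multiset.card_map]; rfl, ?_⟩
      intro b hb
      rw [Multiset.mem_map] at hb
      obtain ⟨c, hc, rfl⟩ := hb
      exact hβ0 c hc
    rw [h1, h2, hcardD, hcardB]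

end Stmt16Aux
namespace Stmt16Aux

variable {d : ℕ}

lemma rado_aux (β : Fin d → ℝ) (hsort : Antitone β) (hβnn : ∀ i, 0 ≤ β i)
    (hsum : ∑ i, β i = 1) {x : Fin d → ℝ} (hx : x ∈ Feas β)
    (hsep : ∀ a b : Fin d, a ≠ b → 0 < x a → 0 < x b →
      ∃ S, Tight β x S ∧ ((a ∈ S ∧ b ∉ S) ∨ (b ∈ S ∧ a ∉ S))) :
    ∀ k : ℕ, ∀ S : Finset (Fin d), Tight β x S → (univ \ S).card = k →
      Multiset.map x (univ \ S).val = Multiset.map β ((blockF S.card d : Finset (Fin d))).val := by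
  intro k
  induction k using Nat.strong_induction_on with
  | _ k ih =>
    intro S hS hcard
    by_cases hSu : S = univ
    · subst hSu
      have h1 : (univ \ univ : Finset (Fin d)) = ∅ := by simp
      have h2 : (blockF (univ : Finset (Fin d)).card d : Finset (Fin d)) = ∅ := by
        ext i
        simp only [blockF, mem_filter, mem_univ, true_and, card_univ, Fintype.card_fin,
          Finset.notMem_empty, iff_false]
        omega
      rw [h1, h2]
      simp
    · obtain ⟨T, hTtight, hST, hmult⟩ := chain_step β hsort hβnn hsum hx hsep hS hSu
      have hsubST : S ⊆ T := hST.1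
      have hTd : T.card ≤ d := by simpa using card_le_card (subset_univ T)
      have hScard : S.card ≤ T.card := card_le_card hsubST
      have hdisj : Disjoint (univ \ T) (T \ S) := by
        rw [Finset.disjoint_left]
        intro a ha hb
        rw [Finset.mem_sdiff] at ha hb
        exact ha.2 hb.1
      have hdecomp : univ \ S = (univ \ T).disjUnion (T \ S) hdisj := by
        ext a
        rw [Finset.mem_disjUnion]
        simp only [Finset.mem_sdiff, mem_univ, true_and]
        by_cases haT : a ∈ T
        · simp [haT]
        · simp [haT]
          exact fun h => haT (hsubST h)
      have hval : (univ \ S).val = (univ \ T).val + (T \ S).val := by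
        rw [hdecomp]; rfl
      -- block decomposition
      have hdisjB : Disjoint (blockF T.card d : Finset (Fin d)) (blockF S.card T.card) := by
        rw [Finset.disjoint_left]
        intro a ha hb
        simp only [blockF, mem_filter, mem_univ, true_and] at ha hb
        omega
      have hdecompB : (blockF S.card d : Finset (Fin d))
          = (blockF T.card d : Finset (Fin d)).disjUnion (blockF S.card T.card) hdisjB := by
        ext a
        rw [Finset.mem_disjUnion]
        simp only [blockF, mem_filter, mem_univ, true_and]
        have := a.isLt
        omega
      have hvalB : (blockF S.card d : Finset (Fin d)).val
          = (blockF T.card d : Finset (Fin d)).val + (blockF S.card T.card : Finset (Fin d)).val := by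
        rw [hdecompB]; rfl
      -- apply ih to T
      have hTcardlt : (univ \ T).card < k := by
        rw [← hcard]
        apply Finset.card_lt_card
        constructor
        · intro a ha
          rw [Finset.mem_sdiff] at ha ⊢
          exact ⟨ha.1, fun h => ha.2 (hsubST h)⟩
        · intro hsub
          obtain ⟨a, haT, haS⟩ := Finset.exists_of_ssubset hST
          have haTc : a ∉ univ \ T := by simp [haT]
          have haSc : a ∈ univ \ S := by simp [haS]
          exact haTc (hsub haSc)
      have hih := ih (univ \ T).card hTcardlt T hTtight rfl
      rw [hval, hvalB, Multiset.map_add, Multiset.map_add, hih, hmult]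

lemma seg_mem {C : Set (Fin d → ℝ)} (hC : Convex ℝ C) {a v : Fin d → ℝ}
    (ha : a ∈ C) (hb : a + v ∈ C) {t : ℝ} (h0 : 0 ≤ t) (h1 : t ≤ 1) :
    a + t • v ∈ C := by
  have key := hC ha hb (a := 1 - t) (b := t) (by linarith) h0 (by ring)
  have : (1 - t) • a + t • (a + v) = a + t • v := by
    funext k
    simp only [Pi.add_apply, Pi.smul_apply, smul_eq_mul]
    ring
  rwa [this] at key

lemma extreme_perm (β : Fin d → ℝ) (hsort : Antitone β) (hβnn : ∀ i, 0 ≤ β i)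
    (hsum : ∑ i, β i = 1) {x : Fin d → ℝ}
    (hx : x ∈ Set.extremePoints ℝ (Feas β)) :
    ∃ σ : Equiv.Perm (Fin d), x = β ∘ σ := by
  obtain ⟨hxF, hext⟩ := hx
  -- separation property
  have hsep : ∀ a b : Fin d, a ≠ b → 0 < x a → 0 < x b →
      ∃ S, Tight β x S ∧ ((a ∈ S ∧ b ∉ S) ∨ (b ∈ S ∧ a ∉ S)) := by
    intro a b hab hxa hxb
    by_contra hno
    push_neg at hno
    have h1 : ∀ S, Tight β x S → b ∈ S → a ∈ S := fun S hS hbS => (hno S hS).2 hbS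
    have h2 : ∀ S, Tight β x S → a ∈ S → b ∈ S := fun S hS haS => (hno S hS).1 haS
    obtain ⟨ε1, hε1, hw1⟩ := pert_mem β hxF hab.symm hxa h1
    obtain ⟨ε2, hε2, hw2⟩ := pert_mem β hxF hab hxb h2
    set ε : ℝ := min ε1 ε2 with hε
    have hεpos : 0 < ε := lt_min hε1 hε2
    have hεle1 : ε / ε1 ≤ 1 := by
      rw [div_le_one hε1]; exact min_le_left _ _
    have hεle2 : ε / ε2 ≤ 1 := by
      rw [div_le_one hε2]; exact min_le_right _ _
    have hw1' : x + ε • dir a b ∈ Feas β := by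
      have := seg_mem (convex_Feas β) hxF hw1 (t := ε / ε1)
        (le_of_lt (div_pos hεpos hε1)) hεle1
      have heq : (ε / ε1) • (ε1 • dir a b) = ε • dir a b := by
        rw [smul_smul, div_mul_cancel₀]
        exact ne_of_gt hε1
      rwa [heq] at this
    have hw2' : x + ε • dir b a ∈ Feas β := by
      have := seg_mem (convex_Feas β) hxF hw2 (t := ε / ε2)
        (le_of_lt (div_pos hεpos hε2)) hεle2
      have heq : (ε / ε2) • (ε2 • dir b a) = ε • dir b a := by
        rw [smul_smul, div_mul_cancel₀]
        exact ne_of_gt hε2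
      rwa [heq] at this
    have hseg : x ∈ openSegment ℝ (x + ε • dir a b) (x + ε • dir b a) := by
      refine ⟨1/2, 1/2, by norm_num, by norm_num, by norm_num, ?_⟩
      funext k
      simp only [Pi.add_apply, Pi.smul_apply, smul_eq_mul, dir]
      ring
    have := hext hw1' hw2' hseg
    have hcontra := congrFun this b
    have hba : (b = a) = False := by simp [hab.symm]
    simp only [Pi.add_apply, Pi.smul_apply, smul_eq_mul, dir, if_pos rfl, hba, if_false,
      if_true, eq_self_iff_true] at hcontra
    have hε0 : ε = 0 := by linarith
    exact absurd hε0 (ne_of_gt hεpos)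
  -- multiset equality
  have hempty : Tight β x (∅ : Finset (Fin d)) := tight_empty β x
  have hms := rado_aux β hsort hβnn hsum hxF hsep (univ \ (∅ : Finset (Fin d))).card
    ∅ hempty rfl
  have h1 : (univ \ (∅ : Finset (Fin d))) = univ := by simp
  have h2 : (blockF (∅ : Finset (Fin d)).card d : Finset (Fin d)) = univ := by
    ext i
    simp [blockF, i.isLt]
  rw [h1, h2] at hms
  -- build the permutation from the multiset equality
  have hcard : ∀ v : ℝ, Fintype.card {a : Fin d // x a = v} = Fintype.card {b : Fin d // β b = v} := by
    intro v
    have e1 : ∀ (f : Fin d → ℝ), Fintype.card {a : Fin d // f a = v}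
        = Multiset.countP (fun a => v = f a) univ.val := by
      intro f
      rw [Fintype.card_subtype]
      rw [show (univ.filter fun a : Fin d => f a = v) = univ.filter (fun a => v = f a) from
        Finset.filter_congr (fun a _ => eq_comm)]
      rw [Multiset.countP_eq_card_filter]
      rfl
    have hcount := congrArg (Multiset.count v) hms
    rw [Multiset.count_map, Multiset.count_map] at hcount
    rw [e1 x, e1 β]
    rw [Multiset.countP_eq_card_filter, Multiset.countP_eq_card_filter]
    exact hcount
  set σ : Fin d ≃ Fin d :=
    Equiv.ofFiberEquiv (f := x) (g := β) (fun v => Fintype.equivOfCardEq (hcard v)) with hσ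
  refine ⟨σ, ?_⟩
  funext a
  exact (Equiv.ofFiberEquiv_map (fun v => Fintype.equivOfCardEq (hcard v)) a).symm

end Stmt16Aux
namespace Stmt16Aux

variable {d : ℕ}

lemma Feas_isClosed (β : Fin d → ℝ) : IsClosed (Feas β) := by
  have hdecomp : Feas β = (⋂ i : Fin d, {x : Fin d → ℝ | 0 ≤ x i}) ∩
      ((⋂ S : Finset (Fin d), {x : Fin d → ℝ | ∑ i ∈ S, x i ≤ bnd β S.card}) ∩
        {x : Fin d → ℝ | ∑ i, x i = 1}) := by
    ext x
    simp only [Feas, Set.mem_inter_iff, Set.mem_iInter, Set.mem_setOf_eq]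
  rw [hdecomp]
  refine IsClosed.inter (isClosed_iInter fun i => isClosed_le continuous_const (continuous_apply i))
    (IsClosed.inter (isClosed_iInter fun S => isClosed_le ?_ continuous_const)
      (isClosed_eq ?_ continuous_const))
  · exact continuous_finset_sum _ (fun i _ => continuous_apply i)
  · exact continuous_finset_sum _ (fun i _ => continuous_apply i)

lemma Feas_isCompact (β : Fin d → ℝ) : IsCompact (Feas β) := by
  apply IsCompact.of_isClosed_subset (isCompact_Icc (a := (0 : Fin d → ℝ)) (b := 1))
    (Feas_isClosed β)
  intro x hx
  rw [Set.mem_Icc]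
  constructor
  · intro i; exact hx.1 i
  · intro i
    have h1 : x i ≤ ∑ j, x j :=
      Finset.single_le_sum (fun j _ => hx.1 j) (mem_univ i)
    rw [hx.2.2] at h1
    exact h1

lemma Feas_subset_permutahedron (β : Fin d → ℝ) (hsort : Antitone β) (hβnn : ∀ i, 0 ≤ β i)
    (hsum : ∑ i, β i = 1) :
    Feas β ⊆ convexHull ℝ {y : Fin d → ℝ | ∃ σ : Equiv.Perm (Fin d), y = β ∘ σ} := by
  have hKM := closure_convexHull_extremePoints (Feas_isCompact β) (convex_Feas β)
  have hsub : Set.extremePoints ℝ (Feas β) ⊆ {y : Fin d → ℝ | ∃ σ : Equiv.Perm (Fin d), y = β ∘ σ} :=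
    fun e he => extreme_perm β hsort hβnn hsum he
  have hfin : Set.Finite {y : Fin d → ℝ | ∃ σ : Equiv.Perm (Fin d), y = β ∘ σ} := by
    have : {y : Fin d → ℝ | ∃ σ : Equiv.Perm (Fin d), y = β ∘ σ}
        = Set.range (fun σ : Equiv.Perm (Fin d) => β ∘ σ) := by
      ext w
      simp only [Set.mem_setOf_eq, Set.mem_range]
      constructor
      · rintro ⟨σ, rfl⟩; exact ⟨σ, rfl⟩
      · rintro ⟨σ, rfl⟩; exact ⟨σ, rfl⟩
    rw [this]
    exact Set.finite_range _
  intro x hx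
  have h1 : x ∈ closure (convexHull ℝ (Set.extremePoints ℝ (Feas β))) := by
    rw [hKM]; exact hx
  have h2 : closure (convexHull ℝ (Set.extremePoints ℝ (Feas β)))
      ⊆ closure (convexHull ℝ {y : Fin d → ℝ | ∃ σ : Equiv.Perm (Fin d), y = β ∘ σ}) :=
    closure_mono (convexHull_mono hsub)
  have h3 : closure (convexHull ℝ {y : Fin d → ℝ | ∃ σ : Equiv.Perm (Fin d), y = β ∘ σ})
      = convexHull ℝ {y : Fin d → ℝ | ∃ σ : Equiv.Perm (Fin d), y = β ∘ σ} :=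
    IsClosed.closure_eq (hfin.isClosed_convexHull (𝕜 := ℝ))
  rw [h3] at h2
  exact h2 h1

lemma permutahedron_subset_Feas (β : Fin d → ℝ) (hsort : Antitone β) (hβnn : ∀ i, 0 ≤ β i)
    (hsum : ∑ i, β i = 1) :
    convexHull ℝ {y : Fin d → ℝ | ∃ σ : Equiv.Perm (Fin d), y = β ∘ σ} ⊆ Feas β := by
  apply convexHull_min _ (convex_Feas β)
  rintro w ⟨σ, rfl⟩
  exact perm_mem_Feas β hsort hβnn hsum σ

end Stmt16Aux
namespace Stmt16Aux

variable {d : ℕ}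

lemma mul_log_div (u P' : ℝ) (hP' : 0 < P') :
    u * Real.log (u / P') = u * Real.log u - u * Real.log P' := by
  by_cases h : u = 0
  · rw [h]; simp
  · rw [Real.log_div h (ne_of_gt hP')]; ring

lemma opt_ineq {Yset : Set (Fin d → ℝ)} {x P : Fin d → ℝ}
    (hxY : x ∈ Yset) (hconv : Convex ℝ Yset)
    (hmin : ∀ w ∈ Yset, relEntropy x P ≤ relEntropy w P)
    {a b : Fin d} (hba : b ≠ a) (hPa : 0 < P a) (hPb : 0 < P b)
    (hxa : 0 < x a) (hxb : 0 ≤ x b)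
    {ε0 : ℝ} (hε0 : 0 < ε0) (hfeas : x + ε0 • dir a b ∈ Yset) :
    x a * P b ≤ x b * P a := by
  by_contra hcon
  push_neg at hcon
  set Δ : ℝ := x a * P b - x b * P a with hΔ
  have hΔpos : 0 < Δ := by rw [hΔ]; linarith
  set ε1 : ℝ := min ε0 (min (x a / 2) (Δ / (2 * (P a + P b)))) with hε1def
  have hε1pos : 0 < ε1 := by
    apply lt_min hε0
    apply lt_min (by linarith)
    positivity
  have hε1a : ε1 ≤ x a / 2 := le_trans (min_le_right _ _) (min_le_left _ _)
  have hε1Δ : ε1 ≤ Δ / (2 * (P a + P b)) := le_trans (min_le_right _ _) (min_le_right _ _)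
  have hε1ε0 : ε1 ≤ ε0 := min_le_left _ _
  set g : ℝ → ℝ := fun s => ((x a - s) * Real.log (x a - s) - (x a - s) * Real.log (P a))
      + ((x b + s) * Real.log (x b + s) - (x b + s) * Real.log (P b)) with hg
  -- identity for the relative entropy of perturbed points
  have hident : ∀ ε : ℝ, relEntropy (x + ε • dir a b) P
      = relEntropy x P - g 0 + g ε := by
    intro ε
    have hbmem : b ∈ univ.erase a := Finset.mem_erase.mpr ⟨hba, mem_univ b⟩
    have hsplit : ∀ u : Fin d → ℝ,
        ∑ k, u k = u a + (u b + ∑ k ∈ (univ.erase a).erase b, u k) := by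
      intro u
      rw [← Finset.add_sum_erase _ u (mem_univ a)]
      congr 1
      rw [← Finset.add_sum_erase _ u hbmem]
    unfold relEntropy
    rw [hsplit (fun k => (x + ε • dir a b) k * Real.log ((x + ε • dir a b) k / P k)),
        hsplit (fun k => x k * Real.log (x k / P k))]
    have hrest : ∑ k ∈ (univ.erase a).erase b,
          (x + ε • dir a b) k * Real.log ((x + ε • dir a b) k / P k)
        = ∑ k ∈ (univ.erase a).erase b, x k * Real.log (x k / P k) := by
      apply Finset.sum_congr rfl
      intro k hk
      have hkb : k ≠ b := Finset.ne_of_mem_erase hk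
      have hka : k ≠ a := Finset.ne_of_mem_erase (Finset.mem_of_mem_erase hk)
      have hwk : (x + ε • dir a b) k = x k := by
        simp only [Pi.add_apply, Pi.smul_apply, smul_eq_mul, dir, if_neg hka, if_neg hkb]
        ring
      rw [hwk]
    have hwa : (x + ε • dir a b) a = x a - ε := by
      have hab : a ≠ b := fun h => hba h.symm
      simp only [Pi.add_apply, Pi.smul_apply, smul_eq_mul, dir, if_neg hab, if_pos rfl, if_true]
      ring
    have hwb : (x + ε • dir a b) b = x b + ε := by
      simp only [Pi.add_apply, Pi.smul_apply, smul_eq_mul, dir, if_neg hba, if_pos rfl, if_true]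
      ring
    simp only [hwa, hwb]
    rw [hrest]
    rw [mul_log_div (x a - ε) (P a) hPa, mul_log_div (x b + ε) (P b) hPb,
        mul_log_div (x a) (P a) hPa, mul_log_div (x b) (P b) hPb, hg]
    simp only [sub_zero, add_zero]
    ring
  -- optimality at ε1
  have hgmono : 0 ≤ g ε1 - g 0 := by
    have hfeas1 : x + ε1 • dir a b ∈ Yset := by
      have hstep := seg_mem hconv hxY hfeas (t := ε1 / ε0)
        (le_of_lt (div_pos hε1pos hε0)) (by rw [div_le_one hε0]; exact hε1ε0)
      rwa [smul_smul, div_mul_cancel₀ _ (ne_of_gt hε0)] at hstep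
    have := hmin _ hfeas1
    rw [hident ε1] at this
    linarith
  -- g is strictly decreasing on [0, ε1]
  have hanti : StrictAntiOn g (Set.Icc 0 ε1) := by
    apply strictAntiOn_of_deriv_neg (convex_Icc 0 ε1)
    · rw [hg]
      apply Continuous.continuousOn
      refine Continuous.add (Continuous.sub ?_ ?_) (Continuous.sub ?_ ?_)
      · exact Real.continuous_mul_log.comp (continuous_const.sub continuous_id)
      · exact (continuous_const.sub continuous_id).mul continuous_const
      · exact Real.continuous_mul_log.comp (continuous_const.add continuous_id)
      · exact (continuous_const.add continuous_id).mul continuous_const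
    · intro s hs
      rw [interior_Icc] at hs
      obtain ⟨hs0, hs1⟩ := hs
      have hxas : 0 < x a - s := by
        have : s < x a / 2 := lt_of_lt_of_le hs1 hε1a
        linarith
      have hxbs : 0 < x b + s := by linarith
      have hd1 : HasDerivAt (fun t : ℝ => x a - t) (-1) s := by
        simpa using (hasDerivAt_id s).const_sub (x a)
      have hd2 : HasDerivAt (fun t : ℝ => x b + t) 1 s := by
        simpa using (hasDerivAt_id s).const_add (x b)
      have hA : HasDerivAt (fun t : ℝ => (x a - t) * Real.log (x a - t))
          ((Real.log (x a - s) + 1) * (-1)) s :=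
        (Real.hasDerivAt_mul_log (ne_of_gt hxas)).comp s hd1
      have hB : HasDerivAt (fun t : ℝ => (x b + t) * Real.log (x b + t))
          ((Real.log (x b + s) + 1) * 1) s :=
        (Real.hasDerivAt_mul_log (ne_of_gt hxbs)).comp s hd2
      have hA2 : HasDerivAt (fun t : ℝ => (x a - t) * Real.log (P a))
          (-1 * Real.log (P a)) s := hd1.mul_const _
      have hB2 : HasDerivAt (fun t : ℝ => (x b + t) * Real.log (P b))
          (1 * Real.log (P b)) s := hd2.mul_const _
      have hgd : HasDerivAt g
          (((Real.log (x a - s) + 1) * (-1) - -1 * Real.log (P a))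
            + ((Real.log (x b + s) + 1) * 1 - 1 * Real.log (P b))) s := by
        rw [hg]
        exact (hA.sub hA2).add (hB.sub hB2)
      rw [hgd.deriv]
      -- numeric inequality
      have h2 : s * (2 * (P a + P b)) < Δ := by
        have h1 : s < Δ / (2 * (P a + P b)) := lt_of_lt_of_le hs1 hε1Δ
        have hpos : 0 < 2 * (P a + P b) := by positivity
        exact (lt_div_iff₀ hpos).mp h1
      have hlt : (x b + s) * P a < (x a - s) * P b := by
        rw [hΔ] at h2
        nlinarith
      have hloglt : Real.log ((x b + s) * P a) < Real.log ((x a - s) * P b) :=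
        Real.log_lt_log (by positivity) hlt
      rw [Real.log_mul (ne_of_gt hxbs) (ne_of_gt hPa),
          Real.log_mul (ne_of_gt hxas) (ne_of_gt hPb)] at hloglt
      linarith
  have hlt := hanti (Set.left_mem_Icc.mpr (le_of_lt hε1pos))
    (Set.right_mem_Icc.mpr (le_of_lt hε1pos)) hε1pos
  linarith

end Stmt16Aux

open Stmt16Aux

theorem stmt16 {d : ℕ} (β : Fin d → ℝ)
    (hsort : Antitone β) (hβnn : ∀ i, 0 ≤ β i) (hsum : ∑ i, β i = 1)
    (ξ : ℝ) (hξ : 1 ≤ ξ) (p q : Fin d → ℝ)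
    (hq : ∀ i, 0 < q i) (hqp : ∀ i, q i ≤ p i) (hpξ : ∀ i, p i ≤ ξ * q i)
    (y z : Fin d → ℝ) (hy : y ∈ permutahedron β) (hz : z ∈ permutahedron β)
    (hymin : ∀ w ∈ permutahedron β, relEntropy y p ≤ relEntropy w p)
    (hzmin : ∀ w ∈ permutahedron β, relEntropy z q ≤ relEntropy w q) :
    ∀ i, y i ≤ ξ * z i := by
  have hYF : permutahedron β ⊆ Feas β := permutahedron_subset_Feas β hsort hβnn hsum
  have hFY : Feas β ⊆ permutahedron β := Feas_subset_permutahedron β hsort hβnn hsum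
  have hconvY : Convex ℝ (permutahedron β) := convex_convexHull ℝ _
  have hyF := hYF hy
  have hzF := hYF hz
  intro i
  by_contra hcon
  push_neg at hcon
  have hξpos : 0 < ξ := lt_of_lt_of_le one_pos hξ
  have hzi0 : 0 ≤ z i := hzF.1 i
  have hyi : z i < y i := by nlinarith
  have hyipos : 0 < y i := by nlinarith
  obtain ⟨j, hji, hyzj, hycond, hzcond⟩ := exchange β hsort hyF hzF hyi
  have hzjpos : 0 < z j := lt_of_le_of_lt (hyF.1 j) hyzj
  have hpi : 0 < p i := lt_of_lt_of_le (hq i) (hqp i)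
  have hpj : 0 < p j := lt_of_lt_of_le (hq j) (hqp j)
  obtain ⟨ε1, hε1, hw1⟩ := pert_mem β hyF hji hyipos hycond
  have h1 : y i * p j ≤ y j * p i :=
    opt_ineq hy hconvY hymin hji hpi hpj hyipos (hyF.1 j) hε1 (hFY hw1)
  obtain ⟨ε2, hε2, hw2⟩ := pert_mem β hzF (Ne.symm hji) hzjpos hzcond
  have h2 : z j * q i ≤ z i * q j :=
    opt_ineq hz hconvY hzmin (Ne.symm hji) (hq j) (hq i) hzjpos hzi0 hε2 (hFY hw2)
  have c1 : y j * p i ≤ y j * (ξ * q i) := mul_le_mul_of_nonneg_left (hpξ i) (hyF.1 j)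
  have c2 : y i * q j ≤ y i * p j := mul_le_mul_of_nonneg_left (hqp j) (le_of_lt hyipos)
  have c3 : ξ * z i * q j < y i * q j := mul_lt_mul_of_pos_right hcon (hq j)
  have c4 : ξ * (z j * q i) ≤ ξ * (z i * q j) := mul_le_mul_of_nonneg_left h2 (le_of_lt hξpos)
  have hfinal : z j * (ξ * q i) < y j * (ξ * q i) := by nlinarith
  have : z j < y j := lt_of_mul_lt_mul_right hfinal (le_of_lt (mul_pos hξpos (hq i)))
  linarith
end

section
/- Let Y be the permutahedron of β (sorted, non-negative, ∑β_i=1), F the negative entropy on Y, F* its convex conjugate, and η > 0. Then Ψ_η(x) := (1/η)·F*(η x) is a ((ln d)/η, η)-approximation of the ordered norm ‖·‖_β: it satisfies ‖x‖_β ≤ Ψ_η(x) ≤ ‖x‖_β + (ln d)/η and ∇Ψ_η(x+s) ≤ exp(η‖s‖_∞)·∇Ψ_η(x) componentwise for all x, s ∈ ℝ^d_{≥0}. -/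
open Finset

noncomputable def negEntropy {d : ℕ} (y : Fin d → ℝ) : ℝ :=
  ∑ i, y i * Real.log (y i)

noncomputable def Fstar {d : ℕ} (β : Fin d → ℝ) (x : Fin d → ℝ) : ℝ :=
  sSup {r : ℝ | ∃ y ∈ permutahedron β, r = (∑ i, x i * y i) - negEntropy y}

open Real

namespace Stmt17

lemma sm_le {n : ℕ} (g : Fin n → ℕ) (hg : StrictMono g) (m : Fin n) : (m : ℕ) ≤ g m := by
  have key : ∀ k : ℕ, ∀ m : Fin n, (m : ℕ) = k → k ≤ g m := by
    intro k
    induction k with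
    | zero => intro m _; omega
    | succ k ih =>
      intro m hm
      have hk : k < n := by omega
      have h1 := ih ⟨k, hk⟩ rfl
      have h2 : (⟨k, hk⟩ : Fin n) < m := by rw [Fin.lt_def]; simp; omega
      have := hg h2; omega
  exact key _ m rfl

variable {d : ℕ} (β : Fin d → ℝ)

noncomputable def bN : ℕ → ℝ := fun k => if h : k < d then β ⟨k, h⟩ else 0

noncomputable def fS (k : ℕ) : ℝ := ∑ j ∈ Finset.range k, bN β j

def P : Set (Fin d → ℝ) :=
  {y | (∀ S : Finset (Fin d), ∑ i ∈ S, y i ≤ fS β S.card) ∧ ∑ i, y i = 1}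

variable {β}

lemma bN_antitone (hsort : Antitone β) (hβnn : ∀ i, 0 ≤ β i) : Antitone (bN β) := by
  intro a b hab
  unfold bN
  split_ifs with h1 h2 h2
  · exact hsort (by exact_mod_cast hab)
  · omega
  · exact hβnn _
  · exact le_refl 0

lemma bN_nonneg (hβnn : ∀ i, 0 ≤ β i) (k : ℕ) : 0 ≤ bN β k := by
  unfold bN; split_ifs; exacts [hβnn _, le_refl 0]

lemma fS_mono (hβnn : ∀ i, 0 ≤ β i) : Monotone (fS β) := fun a b hab =>
  Finset.sum_le_sum_of_subset_of_nonneg (Finset.range_subset_range.2 hab)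
    (fun k _ _ => bN_nonneg hβnn k)

lemma fS_concave (hsort : Antitone β) (hβnn : ∀ i, 0 ≤ β i)
    {u v a b : ℕ} (hva : v ≤ a) (hau : a ≤ u) (hvb : v ≤ b) (hbu : b ≤ u)
    (hsum : u + v = a + b) :
    fS β u + fS β v ≤ fS β a + fS β b := by
  have key : fS β u - fS β b ≤ fS β a - fS β v := by
    have h1 : fS β u - fS β b = ∑ j ∈ Finset.Ico b u, bN β j := by
      rw [Finset.sum_Ico_eq_sub _ hbu]; unfold fS; ring
    have h2 : fS β a - fS β v = ∑ j ∈ Finset.Ico v a, bN β j := by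
      rw [Finset.sum_Ico_eq_sub _ hva]; unfold fS; ring
    rw [h1, h2, Finset.sum_Ico_eq_sum_range, Finset.sum_Ico_eq_sum_range]
    have hlen : u - b = a - v := by omega
    rw [hlen]
    exact Finset.sum_le_sum fun m _ => bN_antitone hsort hβnn (by omega)
  linarith

lemma subset_sum_le (hsort : Antitone β) (hβnn : ∀ i, 0 ≤ β i) (T : Finset (Fin d)) :
    ∑ i ∈ T, β i ≤ fS β T.card := by
  classical
  have hcard : T.card ≤ d := by simpa using Finset.card_le_card (Finset.subset_univ T)
  set e := T.orderIsoOfFin rfl with he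
  have hmono : StrictMono fun m : Fin T.card => ((e m : Fin d) : ℕ) := fun a b hab => by
    exact_mod_cast (e.lt_iff_lt.2 hab)
  have hge : ∀ m : Fin T.card, (m : ℕ) ≤ ((e m : Fin d) : ℕ) := sm_le _ hmono
  have h1 : ∑ i ∈ T, β i = ∑ m : Fin T.card, β (e m : Fin d) := by
    rw [← Finset.sum_attach T β]
    exact (Equiv.sum_comp e.toEquiv (fun i => β i.1)).symm
  rw [h1]
  have h2 : fS β T.card = ∑ m : Fin T.card, bN β m := by
    unfold fS; rw [Finset.sum_range fun j => bN β j]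
  rw [h2]
  refine Finset.sum_le_sum fun m _ => ?_
  have hm : (m : ℕ) < d := lt_of_lt_of_le m.2 hcard
  have hb : bN β (m : ℕ) = β ⟨m, hm⟩ := by unfold bN; rw [dif_pos hm]
  rw [hb]
  exact hsort (by exact_mod_cast hge m)

lemma fS_univ (hsum : ∑ i, β i = 1) : fS β d = 1 := by
  unfold fS
  rw [← hsum, ← Fin.sum_univ_eq_sum_range (fun j => bN β j) d]
  refine Finset.sum_congr rfl fun i _ => ?_
  unfold bN; rw [dif_pos i.2]

lemma convex_P : Convex ℝ (P β) := by
  intro y hy z hz p q hp hq hpq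
  have expand : ∀ T : Finset (Fin d), ∑ i ∈ T, (p • y + q • z) i
      = p * ∑ i ∈ T, y i + q * ∑ i ∈ T, z i := by
    intro T
    rw [Finset.mul_sum, Finset.mul_sum, ← Finset.sum_add_distrib]
    exact Finset.sum_congr rfl fun i _ => by simp [mul_comm]
  constructor
  · intro S
    have h1 := mul_le_mul_of_nonneg_left (hy.1 S) hp
    have h2 := mul_le_mul_of_nonneg_left (hz.1 S) hq
    have h3 : p * fS β S.card + q * fS β S.card = fS β S.card := by
      rw [← add_mul, hpq, one_mul]
    rw [expand S]
    linarith
  · rw [expand Finset.univ, hy.2, hz.2]; linarith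

lemma vertex_mem_P (hsort : Antitone β) (hβnn : ∀ i, 0 ≤ β i) (hsum : ∑ i, β i = 1)
    (σ : Equiv.Perm (Fin d)) : (β ∘ σ) ∈ P β := by
  constructor
  · intro S
    have himg : ∑ i ∈ S, β (σ i) = ∑ i ∈ S.image σ, β i :=
      (Finset.sum_image (fun a _ b _ h => σ.injective h)).symm
    have hcard : (S.image σ).card = S.card := Finset.card_image_of_injective _ σ.injective
    calc ∑ i ∈ S, (β ∘ σ) i = ∑ i ∈ S.image σ, β i := himg
      _ ≤ fS β (S.image σ).card := subset_sum_le hsort hβnn _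
      _ = fS β S.card := by rw [hcard]
  · simpa using (Equiv.sum_comp σ β).trans hsum

lemma hull_subset_P (hsort : Antitone β) (hβnn : ∀ i, 0 ≤ β i) (hsum : ∑ i, β i = 1) :
    permutahedron β ⊆ P β :=
  convexHull_min (fun y ⟨σ, hσ⟩ => hσ ▸ vertex_mem_P hsort hβnn hsum σ) convex_P

/-! ### Abel summation -/

lemma abel_le (n : ℕ) (a yv bv : ℕ → ℝ)
    (ha : ∀ k, k + 1 < n → a (k + 1) ≤ a k)
    (hle : ∀ k, k ≤ n → ∑ j ∈ Finset.range k, yv j ≤ ∑ j ∈ Finset.range k, bv j)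
    (heq : ∑ j ∈ Finset.range n, yv j = ∑ j ∈ Finset.range n, bv j) :
    ∑ j ∈ Finset.range n, a j * yv j ≤ ∑ j ∈ Finset.range n, a j * bv j := by
  set g : ℕ → ℝ := fun k => ∑ j ∈ Finset.range k, (yv j - bv j) with hg
  have hgle : ∀ k, k ≤ n → g k ≤ 0 := by
    intro k hk
    have := hle k hk
    simp only [hg, Finset.sum_sub_distrib]
    linarith
  have key : ∀ k, 1 ≤ k → k ≤ n →
      ∑ j ∈ Finset.range k, a j * (yv j - bv j) ≤ a (k - 1) * g k := by
    intro k
    induction k with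
    | zero => omega
    | succ k ih =>
      intro _ hk1
      rcases Nat.eq_or_lt_of_le (show 1 ≤ k + 1 by omega) with h1 | h1
      · have hk0 : k = 0 := by omega
        subst hk0
        simp [hg, Finset.sum_range_succ]
      · have hk : 1 ≤ k := by omega
        have ihk := ih hk (by omega)
        have hgk : g (k + 1) = g k + (yv k - bv k) := by
          simp [hg, Finset.sum_range_succ]; ring
        have hak : a k ≤ a (k - 1) := by
          have := ha (k - 1) (by omega)
          have hkk : k - 1 + 1 = k := by omega
          rwa [hkk] at this
        have hgk0 : g k ≤ 0 := hgle k (by omega)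
        have : a (k - 1) * g k ≤ a k * g k := by nlinarith
        rw [Finset.sum_range_succ]
        have hsimp : (k + 1) - 1 = k := by omega
        rw [hsimp, hgk]
        nlinarith
  rcases Nat.eq_zero_or_pos n with h | h
  · simp [h]
  · have := key n (by omega) le_rfl
    have hgn : g n = 0 := by
      simp only [hg, Finset.sum_sub_distrib]; linarith
    rw [hgn, mul_zero] at this
    rw [← sub_nonpos, ← Finset.sum_sub_distrib]
    calc ∑ j ∈ Finset.range n, (a j * yv j - a j * bv j)
        = ∑ j ∈ Finset.range n, a j * (yv j - bv j) := by
          exact Finset.sum_congr rfl fun j _ => by ring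
      _ ≤ 0 := this

/-! ### dot products against the polytope -/

lemma sum_attachFin' {n : ℕ} (s : Finset ℕ) (h : ∀ m ∈ s, m < n) (g : Fin n → ℝ) :
    ∑ i ∈ s.attachFin h, g i = ∑ j ∈ s, if hj : j < n then g ⟨j, hj⟩ else 0 := by
  apply Finset.sum_bij (i := fun (i : Fin n) (_ : i ∈ s.attachFin h) => (i : ℕ))
  · intro i hi; exact (Finset.mem_attachFin h).1 hi
  · intro i _ j _ hij; exact Fin.val_injective hij
  · intro j hj; exact ⟨⟨j, h j hj⟩, (Finset.mem_attachFin h).2 hj, rfl⟩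
  · intro i hi; rw [dif_pos i.2]

variable (x : Fin d → ℝ)

/-- the sorting permutation: `x ∘ descPerm x` is `sortDesc x`, i.e. antitone. -/
noncomputable def descPerm : Equiv.Perm (Fin d) := Tuple.sort x * Fin.revPerm

lemma sortDesc_eq (k : Fin d) : sortDesc x k = x (descPerm x k) := rfl

lemma sortDesc_antitone : Antitone (fun k => x (descPerm x k)) := by
  intro k l hkl
  have h1 : l.rev ≤ k.rev := Fin.rev_le_rev.2 hkl
  have := Tuple.monotone_sort x h1
  simpa [descPerm] using this

variable {x}

lemma dot_le_sorted {y : Fin d → ℝ} (hsort : Antitone β) (hβnn : ∀ i, 0 ≤ β i)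
    (hsum : ∑ i, β i = 1) (hy : y ∈ P β) :
    ∑ i, x i * y i ≤ ∑ k, sortDesc x k * β k := by
  classical
  set pp := descPerm x with hpp
  have h0 : ∑ i, x i * y i = ∑ k, x (pp k) * y (pp k) :=
    (Equiv.sum_comp pp (fun i => x i * y i)).symm
  set aN : ℕ → ℝ := fun j => if hj : j < d then x (pp ⟨j, hj⟩) else 0 with haN
  set yN : ℕ → ℝ := fun j => if hj : j < d then y (pp ⟨j, hj⟩) else 0 with hyN
  have key : ∑ j ∈ Finset.range d, aN j * yN j ≤ ∑ j ∈ Finset.range d, aN j * bN β j := by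
    apply abel_le
    · intro k hk
      have h1 : k < d := by omega
      simp only [haN, dif_pos hk, dif_pos h1]
      exact sortDesc_antitone x (by simp [Fin.le_def])
    · intro k hk
      have hmem : ∀ m ∈ Finset.range k, m < d := fun m hm =>
        lt_of_lt_of_le (Finset.mem_range.1 hm) hk
      have h1 : ∑ j ∈ Finset.range k, yN j
          = ∑ i ∈ (Finset.range k).attachFin hmem, y (pp i) := by
        rw [sum_attachFin' _ hmem (fun i => y (pp i))]
      have h2 : ∑ i ∈ (Finset.range k).attachFin hmem, y (pp i)
          = ∑ i ∈ ((Finset.range k).attachFin hmem).image pp, y i :=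
        (Finset.sum_image (fun a _ b _ hab => pp.injective hab)).symm
      have hcard : (((Finset.range k).attachFin hmem).image pp).card = k := by
        rw [Finset.card_image_of_injective _ pp.injective, Finset.card_attachFin,
          Finset.card_range]
      have h3 := hy.1 (((Finset.range k).attachFin hmem).image pp)
      rw [hcard] at h3
      rw [h1, h2]
      exact h3.trans_eq rfl
    · have hmem : ∀ m ∈ Finset.range d, m < d := fun m hm => Finset.mem_range.1 hm
      have h1 : ∑ j ∈ Finset.range d, yN j
          = ∑ i ∈ (Finset.range d).attachFin hmem, y (pp i) := by
        rw [sum_attachFin' _ hmem (fun i => y (pp i))]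
      have h2 : (Finset.range d).attachFin hmem = Finset.univ := by
        ext i; simp [Finset.mem_attachFin]
      rw [h1, h2, Equiv.sum_comp pp y, hy.2]
      exact (fS_univ hsum).symm
  have hL : ∑ k, x (pp k) * y (pp k) = ∑ j ∈ Finset.range d, aN j * yN j := by
    rw [← Fin.sum_univ_eq_sum_range (fun j => aN j * yN j) d]
    refine Finset.sum_congr rfl fun i _ => ?_
    simp only [haN, hyN, dif_pos i.2]
  have hR : ∑ j ∈ Finset.range d, aN j * bN β j = ∑ k, sortDesc x k * β k := by
    rw [← Fin.sum_univ_eq_sum_range (fun j => aN j * bN β j) d]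
    refine Finset.sum_congr rfl fun i _ => ?_
    simp only [haN, dif_pos i.2]
    unfold bN
    rw [dif_pos i.2]
    rfl
  rw [h0, hL, ← hR]
  exact key

lemma sorted_dot_eq_vertex :
    ∑ k, sortDesc x k * β k = ∑ i, x i * (β ∘ (descPerm x).symm) i := by
  rw [← Equiv.sum_comp (descPerm x) (fun i => x i * (β ∘ (descPerm x).symm) i)]
  refine Finset.sum_congr rfl fun k _ => ?_
  simp [sortDesc_eq]

lemma P_nonneg {y : Fin d → ℝ} (hβnn : ∀ i, 0 ≤ β i) (hsum : ∑ i, β i = 1)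
    (hy : y ∈ P β) (i : Fin d) : 0 ≤ y i := by
  classical
  have h1 := hy.1 (Finset.univ.erase i)
  have h2 : ∑ j ∈ Finset.univ.erase i, y j = (∑ j, y j) - y i := by
    rw [Finset.sum_erase_eq_sub (Finset.mem_univ i)]
  have h3 : fS β (Finset.univ.erase i).card ≤ fS β d :=
    fS_mono hβnn (by simpa using Finset.card_le_card (Finset.subset_univ _))
  rw [fS_univ hsum] at h3
  rw [h2, hy.2] at h1
  linarith

lemma P_le_one {y : Fin d → ℝ} (hβnn : ∀ i, 0 ≤ β i) (hsum : ∑ i, β i = 1)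
    (hy : y ∈ P β) (i : Fin d) : y i ≤ 1 := by
  classical
  have h1 := hy.1 {i}
  have h3 : fS β ({i} : Finset (Fin d)).card ≤ fS β d :=
    fS_mono hβnn (by simp; exact i.pos)
  rw [fS_univ hsum] at h3
  simpa using h1.trans h3

lemma negEntropy_nonpos {y : Fin d → ℝ} (h0 : ∀ i, 0 ≤ y i) (h1 : ∀ i, y i ≤ 1) :
    negEntropy y ≤ 0 :=
  Finset.sum_nonpos fun i _ => Real.mul_log_nonpos (h0 i) (h1 i)

lemma negEntropy_ge (hd : 0 < d) {y : Fin d → ℝ} (h0 : ∀ i, 0 ≤ y i)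
    (hs : ∑ i, y i = 1) : -Real.log d ≤ negEntropy y := by
  have hdpos : (0 : ℝ) < d := by exact_mod_cast hd
  have key : ∀ i, -(y i * Real.log (y i)) ≤ y i * Real.log d + 1 / d - y i := by
    intro i
    rcases eq_or_lt_of_le (h0 i) with h | h
    · rw [← h]; simp

    · have hpos : (0 : ℝ) < d * y i := by positivity
      have hlog := Real.log_le_sub_one_of_pos (show (0:ℝ) < 1 / (d * y i) by positivity)
      have hlog2 : Real.log (1 / (d * y i)) = -(Real.log d + Real.log (y i)) := by
        rw [one_div, Real.log_inv, Real.log_mul (ne_of_gt hdpos) (ne_of_gt h)]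
      rw [hlog2] at hlog
      have := mul_le_mul_of_nonneg_left hlog (le_of_lt h)
      have hinv : y i * (1 / (d * y i) - 1) = 1 / d - y i := by
        field_simp
      nlinarith
  have hsumkey := Finset.sum_le_sum fun i (_ : i ∈ Finset.univ) => key i
  rw [Finset.sum_neg_distrib] at hsumkey
  have hrhs : ∑ i, (y i * Real.log d + 1 / d - y i)
      = Real.log d * (∑ i, y i) + d * (1 / d) - ∑ i, y i := by
    rw [Finset.sum_sub_distrib, Finset.sum_add_distrib, ← Finset.sum_mul]
    simp [Finset.sum_const, mul_comm]
  rw [hrhs, hs] at hsumkey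
  unfold negEntropy
  have : d * (1 / d : ℝ) = 1 := by field_simp
  rw [this] at hsumkey
  linarith

/-! ### Fstar is an attained maximum -/

lemma hull_nonempty : (permutahedron β).Nonempty :=
  ⟨β ∘ (1 : Equiv.Perm (Fin d)), subset_convexHull ℝ _ ⟨1, rfl⟩⟩

lemma isCompact_hull : IsCompact (permutahedron β) := by
  apply Set.Finite.isCompact_convexHull
  have : {y : Fin d → ℝ | ∃ σ : Equiv.Perm (Fin d), y = β ∘ σ}
      = Set.range (fun σ : Equiv.Perm (Fin d) => β ∘ σ) := by
    ext y; simp [Set.mem_setOf_eq, eq_comm]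
  rw [this]
  exact Set.finite_range _

lemma phi_continuous (w : Fin d → ℝ) :
    Continuous (fun y : Fin d → ℝ => (∑ i, w i * y i) - negEntropy y) := by
  apply Continuous.sub
  · exact continuous_finset_sum _ fun i _ => continuous_const.mul (continuous_apply i)
  · exact continuous_finset_sum _ fun i _ => Real.continuous_mul_log.comp (continuous_apply i)

lemma Fstar_spec (w : Fin d → ℝ) :
    ∃ g ∈ permutahedron β, ((∑ i, w i * g i) - negEntropy g = Fstar β w ∧
      ∀ y ∈ permutahedron β, (∑ i, w i * y i) - negEntropy y ≤ Fstar β w) := by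
  obtain ⟨g, hg, hmax⟩ := (isCompact_hull (β := β)).exists_isMaxOn hull_nonempty
    ((phi_continuous w).continuousOn)
  have hgreat : IsGreatest {r : ℝ | ∃ y ∈ permutahedron β,
      r = (∑ i, w i * y i) - negEntropy y} ((∑ i, w i * g i) - negEntropy g) := by
    constructor
    · exact ⟨g, hg, rfl⟩
    · rintro r ⟨y, hy, rfl⟩
      exact hmax hy
  have hsup : Fstar β w = (∑ i, w i * g i) - negEntropy g := hgreat.csSup_eq
  refine ⟨g, hg, hsup.symm, ?_⟩
  intro y hy
  rw [hsup]
  exact hmax hy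

/-! ### Part 1 -/

lemma orderedNorm_eq (x : Fin d → ℝ) (hx : ∀ i, 0 ≤ x i) :
    orderedNorm β x = ∑ k, sortDesc x k * β k := by
  unfold orderedNorm
  have : (fun j => |x j|) = x := funext fun j => abs_of_nonneg (hx j)
  rw [this]
  exact Finset.sum_congr rfl fun k _ => mul_comm _ _

lemma part1 (hd : 0 < d) (hsort : Antitone β) (hβnn : ∀ i, 0 ≤ β i)
    (hsum : ∑ i, β i = 1) {η : ℝ} (hη : 0 < η) (x : Fin d → ℝ) (hx : ∀ i, 0 ≤ x i) :
    orderedNorm β x ≤ (1 / η) * Fstar β (η • x) ∧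
      (1 / η) * Fstar β (η • x) ≤ orderedNorm β x + Real.log d / η := by
  obtain ⟨g, hg, hFeq, hFle⟩ := Fstar_spec (β := β) (η • x)
  have hgP : g ∈ P β := hull_subset_P hsort hβnn hsum hg
  have hw : ∀ (y : Fin d → ℝ), ∑ i, (η • x) i * y i = η * ∑ i, x i * y i := by
    intro y
    rw [Finset.mul_sum]
    exact Finset.sum_congr rfl fun i _ => by simp [mul_assoc]
  have hnorm := orderedNorm_eq (β := β) x hx
  constructor
  · -- lower bound
    set v : Fin d → ℝ := β ∘ (descPerm x).symm with hv
    have hvmem : v ∈ permutahedron β := subset_convexHull ℝ _ ⟨(descPerm x).symm, rfl⟩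
    have hvP : v ∈ P β := hull_subset_P hsort hβnn hsum hvmem
    have hvdot : ∑ i, x i * v i = orderedNorm β x := by
      rw [hnorm, sorted_dot_eq_vertex]
    have hvent : negEntropy v ≤ 0 :=
      negEntropy_nonpos (fun i => P_nonneg hβnn hsum hvP i) (fun i => P_le_one hβnn hsum hvP i)
    have h1 : η * orderedNorm β x ≤ Fstar β (η • x) := by
      have := hFle v hvmem
      rw [hw v, hvdot] at this
      linarith
    have := mul_le_mul_of_nonneg_left h1 (le_of_lt (one_div_pos.2 hη))
    calc orderedNorm β x = (1 / η) * (η * orderedNorm β x) := by field_simp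
      _ ≤ (1 / η) * Fstar β (η • x) := this
  · -- upper bound
    have hgdot : ∑ i, x i * g i ≤ orderedNorm β x := by
      rw [hnorm]
      exact dot_le_sorted hsort hβnn hsum hgP
    have hgent : -Real.log d ≤ negEntropy g :=
      negEntropy_ge hd (fun i => P_nonneg hβnn hsum hgP i) hgP.2
    have h1 : Fstar β (η • x) ≤ η * orderedNorm β x + Real.log d := by
      rw [← hFeq, hw g]
      have := mul_le_mul_of_nonneg_left hgdot (le_of_lt hη)
      linarith
    have := mul_le_mul_of_nonneg_left h1 (le_of_lt (one_div_pos.2 hη))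
    calc (1 / η) * Fstar β (η • x) ≤ (1 / η) * (η * orderedNorm β x + Real.log d) := this
      _ = orderedNorm β x + Real.log d / η := by field_simp

/-! ### the gradient is the entropic argmax -/

lemma clm_apply_single (g : Fin d → ℝ) (j : Fin d) :
    (∑ i, g i • (ContinuousLinearMap.proj i : (Fin d → ℝ) →L[ℝ] ℝ)) (Pi.single j 1) = g j := by
  simp [ContinuousLinearMap.sum_apply, Pi.single_apply]

lemma argmax_eq_grad {η : ℝ} (hη : 0 < η) (x : Fin d → ℝ) (g : Fin d → ℝ)
    (hD : HasFDerivAt (fun z : Fin d → ℝ => (1 / η) * Fstar β (η • z))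
      (∑ i, g i • (ContinuousLinearMap.proj i : (Fin d → ℝ) →L[ℝ] ℝ)) x)
    {y : Fin d → ℝ} (hy : y ∈ permutahedron β)
    (hymax : (∑ i, (η • x) i * y i) - negEntropy y = Fstar β (η • x)) :
    y = g := by
  classical
  set Ψ : (Fin d → ℝ) → ℝ := fun z => (1 / η) * Fstar β (η • z) with hΨ
  have hsupport : ∀ z : Fin d → ℝ,
      (∑ i, y i * z i) - negEntropy y / η ≤ Ψ z := by
    intro z
    obtain ⟨g0, hg0, hFeq, hFle⟩ := Fstar_spec (β := β) (η • z)
    have h1 := hFle y hy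
    have h2 : ∑ i, (η • z) i * y i = η * ∑ i, y i * z i := by
      rw [Finset.mul_sum]
      exact Finset.sum_congr rfl fun i _ => by rw [Pi.smul_apply, smul_eq_mul]; ring
    rw [h2] at h1
    have h3 := mul_le_mul_of_nonneg_left h1 (le_of_lt (one_div_pos.2 hη))
    calc (∑ i, y i * z i) - negEntropy y / η
        = (1 / η) * (η * (∑ i, y i * z i) - negEntropy y) := by field_simp
      _ ≤ Ψ z := h3
  have hxeq : (∑ i, y i * x i) - negEntropy y / η = Ψ x := by
    have h2 : ∑ i, (η • x) i * y i = η * ∑ i, y i * x i := by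
      rw [Finset.mul_sum]
      exact Finset.sum_congr rfl fun i _ => by rw [Pi.smul_apply, smul_eq_mul]; ring
    rw [h2] at hymax
    show (∑ i, y i * x i) - negEntropy y / η = 1 / η * Fstar β (η • x)
    rw [← hymax]
    field_simp
  set L : (Fin d → ℝ) →L[ℝ] ℝ := ∑ i, y i • (ContinuousLinearMap.proj i) with hL
  have hLapp : ∀ z, L z = ∑ i, y i * z i := by
    intro z
    rw [hL, ContinuousLinearMap.sum_apply]
    exact Finset.sum_congr rfl fun i _ => rfl
  have hmin : IsLocalMin (fun z => Ψ z - L z) x := by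
    apply Filter.Eventually.of_forall
    intro z
    have h1 := hsupport z
    show Ψ x - L x ≤ Ψ z - L z
    rw [hLapp z, hLapp x]
    linarith [hxeq]
  have hDh : HasFDerivAt (fun z => Ψ z - L z)
      ((∑ i, g i • (ContinuousLinearMap.proj i : (Fin d → ℝ) →L[ℝ] ℝ)) - L) x :=
    hD.sub L.hasFDerivAt
  have hzero := hmin.hasFDerivAt_eq_zero hDh
  funext j
  have := congrArg (fun (T : (Fin d → ℝ) →L[ℝ] ℝ) => T ((Pi.single j 1 : Fin d → ℝ))) hzero
  simp only [ContinuousLinearMap.sub_apply, ContinuousLinearMap.zero_apply] at this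
  rw [clm_apply_single, hLapp] at this
  have hsingle : ∑ i, y i * (Pi.single j 1 : Fin d → ℝ) i = y j := by simp [Pi.single_apply]
  rw [hsingle] at this
  linarith

lemma grad_spec {η : ℝ} (hη : 0 < η) (x : Fin d → ℝ) (g : Fin d → ℝ)
    (hD : HasFDerivAt (fun z : Fin d → ℝ => (1 / η) * Fstar β (η • z))
      (∑ i, g i • (ContinuousLinearMap.proj i : (Fin d → ℝ) →L[ℝ] ℝ)) x) :
    g ∈ permutahedron β ∧ ((∑ i, (η • x) i * g i) - negEntropy g = Fstar β (η • x)) ∧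
      ∀ y ∈ permutahedron β, (∑ i, (η • x) i * y i) - negEntropy y ≤ Fstar β (η • x) := by
  obtain ⟨g0, hg0, hFeq, hFle⟩ := Fstar_spec (β := β) (η • x)
  have hgeq : g0 = g := argmax_eq_grad hη x g hD hg0 hFeq
  subst hgeq
  exact ⟨hg0, hFeq, hFle⟩

/-! ### positivity of the argmax -/

lemma neg_mul_log_le_one {u : ℝ} (h0 : 0 ≤ u) (h1 : u ≤ 1) : -(u * Real.log u) ≤ 1 := by
  rcases eq_or_lt_of_le h0 with h | h
  · rw [← h]; simp
  · have hlog := Real.log_le_sub_one_of_pos (show (0:ℝ) < 1 / u by positivity)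
    rw [Real.log_div one_ne_zero (ne_of_gt h), Real.log_one] at hlog
    have := mul_le_mul_of_nonneg_left hlog (le_of_lt h)
    have hu : u * (1 / u - 1) = 1 - u := by field_simp
    nlinarith

lemma centroid_mem (hd : 0 < d) (hsum : ∑ i, β i = 1) :
    (fun _ : Fin d => (1 : ℝ) / d) ∈ permutahedron β := by
  haveI : NeZero d := ⟨hd.ne'⟩
  have hc : (fun _ : Fin d => (1 : ℝ) / d)
      = ∑ k : Fin d, (1 / (d : ℝ)) • (β ∘ (Equiv.addRight k : Equiv.Perm (Fin d))) := by
    funext j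
    have hrw : ∀ k : Fin d, ((1 / (d : ℝ)) • (β ∘ (Equiv.addRight k : Equiv.Perm (Fin d)))) j
        = (1 / (d : ℝ)) * β (j + k) := fun k => rfl
    rw [Finset.sum_apply]
    rw [Finset.sum_congr rfl fun k _ => hrw k, ← Finset.mul_sum]
    have : ∑ k : Fin d, β (j + k) = ∑ m, β m := Equiv.sum_comp (Equiv.addLeft j) β
    rw [this, hsum, mul_one]
  rw [hc]
  apply (convex_convexHull ℝ _).sum_mem
  · intro k _; positivity
  · rw [Finset.sum_const, Finset.card_univ, Fintype.card_fin, nsmul_eq_mul]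
    field_simp
  · intro k _
    exact subset_convexHull ℝ _ ⟨Equiv.addRight k, rfl⟩

lemma argmax_pos (hd : 0 < d) (hsort : Antitone β) (hβnn : ∀ i, 0 ≤ β i)
    (hsum : ∑ i, β i = 1) {w g : Fin d → ℝ} (hg : g ∈ permutahedron β)
    (hmax : ∀ y ∈ permutahedron β,
      (∑ i, w i * y i) - negEntropy y ≤ (∑ i, w i * g i) - negEntropy g)
    (i : Fin d) : 0 < g i := by
  have hgP : g ∈ P β := hull_subset_P hsort hβnn hsum hg
  have hgnn : ∀ j, 0 ≤ g j := fun j => P_nonneg hβnn hsum hgP j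
  have hgle : ∀ j, g j ≤ 1 := fun j => P_le_one hβnn hsum hgP j
  by_contra hneg
  have hgi : g i = 0 := le_antisymm (not_lt.1 hneg) (hgnn i)
  have hdpos : (0 : ℝ) < d := by exact_mod_cast hd
  set c : Fin d → ℝ := fun _ => (1 : ℝ) / d with hcdef
  have hcmem : c ∈ permutahedron β := centroid_mem hd hsum
  set K : ℝ := |∑ j, w j * c j - ∑ j, w j * g j| with hK
  have hKnn : 0 ≤ K := abs_nonneg _
  set A : ℝ := d * (K + d) + 1 with hA
  set t : ℝ := d * Real.exp (-A) with ht
  have htpos : 0 < t := by positivity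
  have hd1 : (1 : ℝ) ≤ d := by exact_mod_cast hd
  have ht1 : t < 1 := by
    have h1 : A + 1 ≤ Real.exp A := Real.add_one_le_exp A
    have h2 : (d : ℝ) < A + 1 := by rw [hA]; nlinarith
    have h3 : (d : ℝ) < Real.exp A := lt_of_lt_of_le h2 h1
    calc t = d * Real.exp (-A) := rfl
      _ < Real.exp A * Real.exp (-A) := mul_lt_mul_of_pos_right h3 (Real.exp_pos _)
      _ = 1 := by rw [← Real.exp_add]; simp
  -- the perturbed point
  set yt : Fin d → ℝ := (1 - t) • g + t • c with hyt
  have hytmem : yt ∈ permutahedron β :=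
    (convex_convexHull ℝ _) hg hcmem (by linarith) (le_of_lt htpos) (by ring)
  have hytapp : ∀ j, yt j = (1 - t) * g j + t * c j := fun j => rfl
  have hyti : yt i = t / d := by
    rw [hytapp i, hgi, hcdef]
    field_simp
    ring
  -- linear part
  have hlin : (∑ j, w j * g j) - t * K ≤ ∑ j, w j * yt j := by
    have hexp : ∑ j, w j * yt j
        = (∑ j, w j * g j) + t * ((∑ j, w j * c j) - ∑ j, w j * g j) := by
      have hterm : ∀ j, w j * yt j = w j * g j + t * (w j * c j - w j * g j) := fun j => by
        rw [hytapp j]; ring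
      rw [Finset.sum_congr rfl fun j _ => hterm j, Finset.sum_add_distrib, ← Finset.mul_sum,
        Finset.sum_sub_distrib]
    rw [hexp]
    have := neg_abs_le ((∑ j, w j * c j) - ∑ j, w j * g j)
    have h4 : -(t * K) ≤ t * ((∑ j, w j * c j) - ∑ j, w j * g j) := by
      rw [hK]
      nlinarith [abs_nonneg ((∑ j, w j * c j) - ∑ j, w j * g j)]
    linarith
  -- entropy part
  have hent : negEntropy yt ≤ (t / d) * Real.log (t / d) + negEntropy g + t * d := by
    have hkey : ∀ j, j ≠ i → yt j * Real.log (yt j) ≤ g j * Real.log (g j) + t := by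
      intro j _
      have hconv := Real.convexOn_mul_log.2 (Set.mem_Ici.2 (hgnn j))
        (Set.mem_Ici.2 (show (0:ℝ) ≤ 1 / d by positivity))
        (by linarith : (0:ℝ) ≤ 1 - t) (le_of_lt htpos) (by ring)
      have h5 : yt j * Real.log (yt j)
          ≤ (1 - t) * (g j * Real.log (g j)) + t * ((1/d) * Real.log (1/d)) := by
        rw [hytapp j, hcdef]
        simpa [smul_eq_mul] using hconv
      have h6 : (1/(d:ℝ)) * Real.log (1/d) ≤ 0 :=
        Real.mul_log_nonpos (by positivity) (by rw [div_le_one hdpos]; exact hd1)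
      have h7 : -(g j * Real.log (g j)) ≤ 1 := neg_mul_log_le_one (hgnn j) (hgle j)
      nlinarith [htpos.le]
    classical
    have hsplit : negEntropy yt
        = yt i * Real.log (yt i) + ∑ j ∈ Finset.univ.erase i, yt j * Real.log (yt j) := by
      unfold negEntropy
      rw [← Finset.add_sum_erase _ _ (Finset.mem_univ i)]
    have hsplitg : negEntropy g = ∑ j ∈ Finset.univ.erase i, g j * Real.log (g j) := by
      unfold negEntropy
      rw [← Finset.add_sum_erase _ _ (Finset.mem_univ i), hgi]
      simp
    have hsum2 : ∑ j ∈ Finset.univ.erase i, yt j * Real.log (yt j)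
        ≤ ∑ j ∈ Finset.univ.erase i, (g j * Real.log (g j) + t) := by
      refine Finset.sum_le_sum fun j hj => hkey j (Finset.ne_of_mem_erase hj)
    have hcount : ∑ j ∈ Finset.univ.erase i, (g j * Real.log (g j) + t)
        = (∑ j ∈ Finset.univ.erase i, g j * Real.log (g j)) + ((d : ℝ) - 1) * t := by
      rw [Finset.sum_add_distrib, Finset.sum_const, Finset.card_erase_of_mem (Finset.mem_univ i),
        Finset.card_univ, Fintype.card_fin, nsmul_eq_mul]
      have : ((d - 1 : ℕ) : ℝ) = (d : ℝ) - 1 := by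
        have : 1 ≤ d := hd
        push_cast [Nat.cast_sub this]
        ring
      rw [this]
    rw [hsplit, hyti, hsplitg]
    rw [hcount] at hsum2
    nlinarith [htpos.le, hdpos]
  -- combine with optimality
  have hopt := hmax yt hytmem
  have hcontra : -((t / d) * Real.log (t / d)) ≤ t * (K + d) := by linarith
  have htd : t / d = Real.exp (-A) := by rw [ht]; field_simp
  rw [htd, Real.log_exp] at hcontra
  have hAe : -(Real.exp (-A) * -A) = Real.exp (-A) * A := by ring
  rw [hAe] at hcontra
  have hexp : 0 < Real.exp (-A) := Real.exp_pos _
  have ht2 : t * (K + d) = Real.exp (-A) * (d * (K + d)) := by rw [ht]; ring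
  rw [ht2] at hcontra
  have hfin : A ≤ d * (K + d) := le_of_mul_le_mul_left (by linarith [hcontra]) hexp
  rw [hA] at hfin
  linarith

/-! ### tight sets and the exchange property -/

def Tight (z : Fin d → ℝ) (S : Finset (Fin d)) : Prop := ∑ i ∈ S, z i = fS β S.card

lemma tight_empty (z : Fin d → ℝ) : Tight (β := β) z ∅ := by
  unfold Tight fS; simp

lemma tight_univ (hsum : ∑ i, β i = 1) {z : Fin d → ℝ} (hz : z ∈ P β) :
    Tight (β := β) z Finset.univ := by
  unfold Tight
  rw [hz.2, Finset.card_univ, Fintype.card_fin, fS_univ hsum]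

lemma tight_union_inter (hsort : Antitone β) (hβnn : ∀ i, 0 ≤ β i)
    {z : Fin d → ℝ} (hz : z ∈ P β) {A B : Finset (Fin d)}
    (hA : Tight (β := β) z A) (hB : Tight (β := β) z B) :
    Tight (β := β) z (A ∪ B) ∧ Tight (β := β) z (A ∩ B) := by
  classical
  have hcard : (A ∪ B).card + (A ∩ B).card = A.card + B.card :=
    Finset.card_union_add_card_inter A B
  have hsub := fS_concave (β := β) hsort hβnn
    (Finset.card_le_card (Finset.inter_subset_left : A ∩ B ⊆ A))
    (Finset.card_le_card (Finset.subset_union_left : A ⊆ A ∪ B))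
    (Finset.card_le_card (Finset.inter_subset_right : A ∩ B ⊆ B))
    (Finset.card_le_card (Finset.subset_union_right : B ⊆ A ∪ B))
    (by omega)
  have hsumid : (∑ i ∈ A ∪ B, z i) + ∑ i ∈ A ∩ B, z i = (∑ i ∈ A, z i) + ∑ i ∈ B, z i :=
    Finset.sum_union_inter
  have h1 := hz.1 (A ∪ B)
  have h2 := hz.1 (A ∩ B)
  unfold Tight at *
  constructor <;> linarith

lemma exists_dep (hsort : Antitone β) (hβnn : ∀ i, 0 ≤ β i) (hsum : ∑ i, β i = 1)
    {z : Fin d → ℝ} (hz : z ∈ P β) (i : Fin d) :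
    ∃ C : Finset (Fin d), Tight (β := β) z C ∧ i ∈ C ∧
      ∀ T, Tight (β := β) z T → i ∈ T → C ⊆ T := by
  classical
  set fam := Finset.univ.powerset.filter (fun S => Tight (β := β) z S ∧ i ∈ S) with hfam
  have hne : fam.Nonempty :=
    ⟨Finset.univ, by simp [hfam, tight_univ hsum hz]⟩
  obtain ⟨C, hCmem, hCmin⟩ := Finset.exists_min_image fam Finset.card hne
  rw [hfam, Finset.mem_filter] at hCmem
  refine ⟨C, hCmem.2.1, hCmem.2.2, ?_⟩
  intro T hT hiT
  have hCT : Tight (β := β) z (C ∩ T) :=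
    (tight_union_inter hsort hβnn hz hCmem.2.1 hT).2
  have hmem : C ∩ T ∈ fam := by
    rw [hfam, Finset.mem_filter]
    exact ⟨Finset.mem_powerset.2 (Finset.subset_univ _), hCT,
      Finset.mem_inter.2 ⟨hCmem.2.2, hiT⟩⟩
  have := hCmin _ hmem
  have heq : C ∩ T = C := Finset.eq_of_subset_of_card_le Finset.inter_subset_left this
  intro a ha
  rw [← heq] at ha
  exact (Finset.mem_inter.1 ha).2

lemma exchange (hsort : Antitone β) (hβnn : ∀ i, 0 ≤ β i) (hsum : ∑ i, β i = 1)
    {z y : Fin d → ℝ} (hz : z ∈ P β) (hy : y ∈ P β) {i : Fin d} (hi : y i < z i) :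
    ∃ j, j ≠ i ∧ z j < y j ∧ (∀ S, Tight (β := β) z S → j ∈ S → i ∈ S) ∧
      (∀ T, Tight (β := β) y T → i ∈ T → j ∈ T) := by
  classical
  obtain ⟨C, hCt, hiC, hCmin⟩ := exists_dep hsort hβnn hsum hy i
  by_contra hcon
  push_neg at hcon
  -- for every j ∈ C with z j < y j there is a z-tight set containing j but not i
  have hbad : ∀ j ∈ C, z j < y j → ∃ S, Tight (β := β) z S ∧ j ∈ S ∧ i ∉ S := by
    intro j hjC hzj
    have hji : j ≠ i := fun h => by rw [h] at hzj; linarith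
    by_contra hno
    push_neg at hno
    obtain ⟨T, hT1, hT2, hT3⟩ := hcon j hji hzj hno
    exact hT3 (hCmin T hT1 hT2 hjC)
  set Bset := C.filter (fun j => z j < y j) with hBset
  have hchoice : ∀ j, ∃ S : Finset (Fin d),
      j ∈ Bset → (Tight (β := β) z S ∧ j ∈ S ∧ i ∉ S) := by
    intro j
    by_cases hj : j ∈ Bset
    · obtain ⟨S, h1, h2, h3⟩ := hbad j (Finset.mem_of_mem_filter j hj)
        (Finset.mem_filter.1 hj).2
      exact ⟨S, fun _ => ⟨h1, h2, h3⟩⟩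
    · exact ⟨∅, fun h => absurd h hj⟩
  choose Sf hSf using hchoice
  set U := Bset.sup Sf with hU
  have hUt : Tight (β := β) z U ∧ i ∉ U := by
    refine Finset.sup_induction (p := fun T => Tight (β := β) z T ∧ i ∉ T) ?_ ?_ ?_
    · exact ⟨tight_empty z, by simp⟩
    · intro a ha b hb
      exact ⟨(tight_union_inter hsort hβnn hz ha.1 hb.1).1, by
        simp [Finset.mem_union]; tauto⟩
    · intro j hj
      obtain ⟨h1, h2, h3⟩ := hSf j hj
      exact ⟨h1, h3⟩
  have hiU : i ∉ U := hUt.2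
  -- every element of C \ U has y k ≤ z k
  have hCU : ∀ k ∈ C \ U, y k ≤ z k := by
    intro k hk
    by_contra hlt
    push_neg at hlt
    have hkC : k ∈ C := (Finset.mem_sdiff.1 hk).1
    have hkB : k ∈ Bset := Finset.mem_filter.2 ⟨hkC, hlt⟩
    have : k ∈ U := by
      have := (hSf k hkB).2.1
      exact Finset.mem_sup.2 ⟨k, hkB, this⟩
    exact (Finset.mem_sdiff.1 hk).2 this
  have hiCU : i ∈ C \ U := Finset.mem_sdiff.2 ⟨hiC, hiU⟩
  have hstrict : ∑ k ∈ C \ U, y k < ∑ k ∈ C \ U, z k :=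
    Finset.sum_lt_sum hCU ⟨i, hiCU, hi⟩
  -- sums
  have hsplit : ∑ k ∈ C ∪ U, z k = (∑ k ∈ U, z k) + ∑ k ∈ C \ U, z k := by
    rw [Finset.union_comm, Finset.union_sdiff_self_eq_union.symm]
    exact Finset.sum_union Finset.disjoint_sdiff
  have hysplit : ∑ k ∈ C \ U, y k = (∑ k ∈ C, y k) - ∑ k ∈ C ∩ U, y k := by
    rw [← Finset.sdiff_inter_self_left]
    rw [Finset.sum_sdiff_eq_sub Finset.inter_subset_left]
  have hzCU := hz.1 (C ∪ U)
  have hyCU := hy.1 (C ∩ U)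
  have hsubmod := fS_concave (β := β) hsort hβnn
    (Finset.card_le_card (Finset.inter_subset_left : C ∩ U ⊆ C))
    (Finset.card_le_card (Finset.subset_union_left : C ⊆ C ∪ U))
    (Finset.card_le_card (Finset.inter_subset_right : C ∩ U ⊆ U))
    (Finset.card_le_card (Finset.subset_union_right : U ⊆ C ∪ U))
    (by have := Finset.card_union_add_card_inter C U; omega)
  unfold Tight at hCt hUt
  linarith [hUt.1]

lemma perturb_mem (hsort : Antitone β) (hβnn : ∀ i, 0 ≤ β i)
    {z : Fin d → ℝ} (hz : z ∈ P β) {i j : Fin d} (hij : j ≠ i)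
    (hfeas : ∀ S, Tight (β := β) z S → j ∈ S → i ∈ S) :
    ∃ ε : ℝ, 0 < ε ∧ ∀ δ : ℝ, 0 < δ → δ ≤ ε →
      z + δ • ((Pi.single j 1 : Fin d → ℝ) - Pi.single i 1) ∈ P β := by
  classical
  set fam := Finset.univ.powerset.filter (fun S : Finset (Fin d) => j ∈ S ∧ i ∉ S) with hfam
  have hne : fam.Nonempty := ⟨{j}, by simp [hfam, Finset.mem_filter, hij.symm]⟩
  set ε := fam.inf' hne (fun S => fS β S.card - ∑ k ∈ S, z k) with hε
  have hεpos : 0 < ε := by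
    rw [hε]
    apply (Finset.lt_inf'_iff hne).2
    intro S hS
    rw [hfam, Finset.mem_filter] at hS
    have hle := hz.1 S
    rcases eq_or_lt_of_le hle with h | h
    · exact absurd (hS.2.1) (fun hb => hS.2.2 (hfeas S h hb))
    · linarith
  refine ⟨ε, hεpos, ?_⟩
  intro δ hδ hδε
  set z' : Fin d → ℝ := z + δ • ((Pi.single j 1 : Fin d → ℝ) - Pi.single i 1) with hz'
  show z' ∈ P β
  have happ : ∀ (S : Finset (Fin d)),
      ∑ k ∈ S, z' k
      = (∑ k ∈ S, z k) + δ * ((if j ∈ S then (1:ℝ) else 0) - if i ∈ S then (1:ℝ) else 0) := by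
    intro S
    have hterm : ∀ k, z' k
        = z k + δ * ((Pi.single j 1 : Fin d → ℝ) k - (Pi.single i 1 : Fin d → ℝ) k) :=
      fun k => rfl
    rw [Finset.sum_congr rfl fun k _ => hterm k, Finset.sum_add_distrib, ← Finset.mul_sum,
      Finset.sum_sub_distrib, Finset.sum_pi_single' j (1:ℝ) S, Finset.sum_pi_single' i (1:ℝ) S]
  constructor
  · intro S
    rw [happ S]
    by_cases hjS : j ∈ S <;> by_cases hiS : i ∈ S <;> simp [hjS, hiS]
    · exact hz.1 S
    · have hSfam : S ∈ fam := by
        rw [hfam, Finset.mem_filter]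
        exact ⟨Finset.mem_powerset.2 (Finset.subset_univ _), hjS, hiS⟩
      have := Finset.inf'_le (fun S => fS β S.card - ∑ k ∈ S, z k) hSfam
      rw [← hε] at this
      linarith [hz.1 S]
    · linarith [hz.1 S]
    · exact hz.1 S
  · rw [happ Finset.univ]
    simp [hz.2]

lemma P_subset_hull (hsort : Antitone β) (hβnn : ∀ i, 0 ≤ β i) (hsum : ∑ i, β i = 1) :
    P β ⊆ permutahedron β := by
  intro y hy
  by_contra hnot
  obtain ⟨f, u, hfu, huf⟩ := geometric_hahn_banach_closed_point
    (convex_convexHull ℝ _) ((isCompact_hull (β := β)).isClosed) hnot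
  set xf : Fin d → ℝ := fun i => f (Pi.single i 1) with hxf
  have hfrep : ∀ a : Fin d → ℝ, f a = ∑ i, xf i * a i := by
    intro a
    have hbasis : ∀ i : Fin d, (fun j => if i = j then (1:ℝ) else 0) = (Pi.single i 1 : Fin d → ℝ) :=
      fun i => funext fun j => by simp [Pi.single_apply, eq_comm]
    conv_lhs => rw [pi_eq_sum_univ a]
    rw [map_sum]
    refine Finset.sum_congr rfl fun i _ => ?_
    rw [hbasis i, f.map_smul]
    simp [hxf, mul_comm]
  set vtx : Fin d → ℝ := β ∘ (descPerm xf).symm with hvtx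
  have hvmem : vtx ∈ permutahedron β := subset_convexHull ℝ _ ⟨(descPerm xf).symm, rfl⟩
  have hfy : f y ≤ f vtx := by
    rw [hfrep y, hfrep vtx]
    have h1 : ∑ i, xf i * y i ≤ ∑ k, sortDesc xf k * β k :=
      dot_le_sorted hsort hβnn hsum hy
    rw [sorted_dot_eq_vertex] at h1
    exact h1
  exact absurd (hfu vtx hvmem) (not_lt.2 (le_of_lt (lt_of_lt_of_le huf hfy)))

/-! ### first-order optimality -/

lemma optimality_dir {w g : Fin d → ℝ} (hg : g ∈ permutahedron β)
    (hmax : ∀ y ∈ permutahedron β,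
      (∑ k, w k * y k) - negEntropy y ≤ (∑ k, w k * g k) - negEntropy g)
    (hgpos : ∀ k, 0 < g k) (u : Fin d → ℝ) (ε : ℝ) (hε : 0 < ε)
    (hmem : ∀ δ : ℝ, 0 < δ → δ ≤ ε → g + δ • u ∈ permutahedron β) :
    ∑ k, u k * (w k - (Real.log (g k) + 1)) ≤ 0 := by
  set h : ℝ → ℝ := fun δ =>
    (∑ k, w k * (g k + δ * u k)) - ∑ k, (g k + δ * u k) * Real.log (g k + δ * u k) with hh
  have happ : ∀ δ : ℝ, ∀ y : Fin d → ℝ, y = g + δ • u →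
      (∑ k, w k * y k) - negEntropy y = h δ := by
    intro δ y hy
    unfold negEntropy
    rw [hh]
    subst hy
    congr 1
  -- derivative of h at 0
  have hD : HasDerivAt h (∑ k, u k * (w k - (Real.log (g k) + 1))) 0 := by
    have h1 : HasDerivAt (fun δ : ℝ => ∑ k, w k * (g k + δ * u k)) (∑ k, w k * u k) 0 := by
      apply HasDerivAt.fun_sum
      intro k _
      have hbase : HasDerivAt (fun δ : ℝ => g k + δ * u k) (u k) 0 := by
        simpa using ((hasDerivAt_id (0:ℝ)).mul_const (u k)).const_add (g k)
      simpa using hbase.const_mul (w k)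
    have h2 : HasDerivAt (fun δ : ℝ => ∑ k, (g k + δ * u k) * Real.log (g k + δ * u k))
        (∑ k, (Real.log (g k) + 1) * u k) 0 := by
      apply HasDerivAt.fun_sum
      intro k _
      have hbase : HasDerivAt (fun δ : ℝ => g k + δ * u k) (u k) 0 := by
        simpa using ((hasDerivAt_id (0:ℝ)).mul_const (u k)).const_add (g k)
      have hne : g k + 0 * u k ≠ 0 := by
        have := hgpos k; intro hcon; rw [zero_mul, add_zero] at hcon; linarith
      have hcomp := (Real.hasDerivAt_mul_log hne).comp 0 hbase
      have heq : g k + 0 * u k = g k := by ring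
      rw [heq] at hcomp
      exact hcomp
    have := h1.sub h2
    have heq : (∑ k, w k * u k) - ∑ k, (Real.log (g k) + 1) * u k
        = ∑ k, u k * (w k - (Real.log (g k) + 1)) := by
      rw [← Finset.sum_sub_distrib]
      exact Finset.sum_congr rfl fun k _ => by ring
    rwa [heq] at this
  -- h δ ≤ h 0 for small positive δ
  have hle : ∀ δ : ℝ, 0 < δ → δ ≤ ε → h δ ≤ h 0 := by
    intro δ hδ hδε
    have hy := hmem δ hδ hδε
    have h1 := hmax _ hy
    rw [happ δ _ rfl] at h1
    have h0 : (∑ k, w k * g k) - negEntropy g = h 0 := by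
      apply happ 0 g
      funext k
      simp
    linarith
  -- conclude derivative is nonpositive
  have htend : Filter.Tendsto (slope h 0) (nhdsWithin 0 (Set.Ioi 0))
      (nhds (∑ k, u k * (w k - (Real.log (g k) + 1)))) := by
    have := hasDerivAt_iff_tendsto_slope.1 hD
    exact this.mono_left (nhdsWithin_mono 0 (fun t ht => by
      simp only [Set.mem_compl_iff, Set.mem_singleton_iff]
      exact ne_of_gt ht))
  refine le_of_tendsto htend ?_
  filter_upwards [Ioc_mem_nhdsGT_of_mem (Set.left_mem_Ico.2 hε)] with δ hδ
  rw [slope_def_field]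
  have h1 := hle δ hδ.1 hδ.2
  have h2 : δ - 0 > 0 := by linarith [hδ.1]
  apply div_nonpos_of_nonpos_of_nonneg <;> linarith

/-! ### the contraction estimate -/

lemma single_diff_sum {i j : Fin d} (F : Fin d → ℝ) :
    ∑ k, ((Pi.single j 1 : Fin d → ℝ) k - (Pi.single i 1 : Fin d → ℝ) k) * F k
      = F j - F i := by
  classical
  have hterm : ∀ k : Fin d, ((Pi.single j 1 : Fin d → ℝ) k - (Pi.single i 1 : Fin d → ℝ) k) * F k
      = (if k = j then F k else 0) - (if k = i then F k else 0) := by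
    intro k
    have h1 : (Pi.single j 1 : Fin d → ℝ) k = if k = j then (1:ℝ) else 0 := Pi.single_apply ..
    have h2 : (Pi.single i 1 : Fin d → ℝ) k = if k = i then (1:ℝ) else 0 := Pi.single_apply ..
    rw [h1, h2]
    split_ifs <;> ring
  rw [Finset.sum_congr rfl fun k _ => hterm k, Finset.sum_sub_distrib]
  simp

lemma part2 (hd : 0 < d) (hsort : Antitone β) (hβnn : ∀ i, 0 ≤ β i)
    (hsum : ∑ i, β i = 1) {η : ℝ} (hη : 0 < η)
    {x s : Fin d → ℝ} (hx : ∀ i, 0 ≤ x i) (hs : ∀ i, 0 ≤ s i) {y z : Fin d → ℝ}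
    (hyD : HasFDerivAt (fun v : Fin d → ℝ => (1 / η) * Fstar β (η • v))
      (∑ i, y i • (ContinuousLinearMap.proj i : (Fin d → ℝ) →L[ℝ] ℝ)) x)
    (hzD : HasFDerivAt (fun v : Fin d → ℝ => (1 / η) * Fstar β (η • v))
      (∑ i, z i • (ContinuousLinearMap.proj i : (Fin d → ℝ) →L[ℝ] ℝ)) (x + s))
    (i : Fin d) (m : ℝ) (hm0 : 0 ≤ m) (hmi : ∀ k, s k ≤ m) :
    z i ≤ Real.exp (η * m) * y i := by
  obtain ⟨hyH, hyEq, hyLe⟩ := grad_spec hη x y hyD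
  obtain ⟨hzH, hzEq, hzLe⟩ := grad_spec hη (x + s) z hzD
  have hymax : ∀ v ∈ permutahedron β, (∑ k, (η • x) k * v k) - negEntropy v
      ≤ (∑ k, (η • x) k * y k) - negEntropy y :=
    fun v hv => (hyLe v hv).trans_eq hyEq.symm
  have hzmax : ∀ v ∈ permutahedron β, (∑ k, (η • (x + s)) k * v k) - negEntropy v
      ≤ (∑ k, (η • (x + s)) k * z k) - negEntropy z :=
    fun v hv => (hzLe v hv).trans_eq hzEq.symm
  have hypos : ∀ k, 0 < y k := argmax_pos hd hsort hβnn hsum hyH hymax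
  have hzpos : ∀ k, 0 < z k := argmax_pos hd hsort hβnn hsum hzH hzmax
  have hyP : y ∈ P β := hull_subset_P hsort hβnn hsum hyH
  have hzP : z ∈ P β := hull_subset_P hsort hβnn hsum hzH
  by_contra hcon
  push_neg at hcon
  have hξ1 : 1 ≤ Real.exp (η * m) := Real.one_le_exp (mul_nonneg hη.le hm0)
  have hzy : y i < z i := by
    have : y i ≤ Real.exp (η * m) * y i := le_mul_of_one_le_left (hypos i).le hξ1
    linarith
  obtain ⟨j, hji, hzj, hfz, hfy⟩ := exchange hsort hβnn hsum hzP hyP hzy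
  -- perturbation at z in direction e_j - e_i
  obtain ⟨ε1, hε1, hmem1⟩ := perturb_mem hsort hβnn hzP hji hfz
  -- perturbation at y in direction e_i - e_j
  obtain ⟨ε2, hε2, hmem2⟩ := perturb_mem hsort hβnn hyP hji.symm hfy
  have hopt1 := optimality_dir hzH hzmax hzpos
    ((Pi.single j 1 : Fin d → ℝ) - Pi.single i 1) ε1 hε1
    (fun δ h1 h2 => P_subset_hull hsort hβnn hsum (hmem1 δ h1 h2))
  have hopt2 := optimality_dir hyH hymax hypos
    ((Pi.single i 1 : Fin d → ℝ) - Pi.single j 1) ε2 hε2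
    (fun δ h1 h2 => P_subset_hull hsort hβnn hsum (hmem2 δ h1 h2))
  simp only [Pi.sub_apply] at hopt1 hopt2
  rw [single_diff_sum] at hopt1 hopt2
  have hW' : ∀ k, (η • (x + s)) k = η * (x k + s k) := fun k => rfl
  have hW : ∀ k, (η • x) k = η * x k := fun k => rfl
  rw [hW' j, hW' i] at hopt1
  rw [hW i, hW j] at hopt2
  -- log comparison
  have hlogj : Real.log (z j) < Real.log (y j) := Real.log_lt_log (hzpos j) hzj
  have hlogi : η * m + Real.log (y i) < Real.log (z i) := by
    have h1 : Real.exp (η * m) * y i < z i := hcon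
    have h2 := Real.log_lt_log (mul_pos (Real.exp_pos _) (hypos i)) h1
    rwa [Real.log_mul (Real.exp_ne_zero _) (ne_of_gt (hypos i)), Real.log_exp] at h2
  have hsi : η * s i ≤ η * m := mul_le_mul_of_nonneg_left (hmi i) hη.le
  have hsj : 0 ≤ η * s j := mul_nonneg hη.le (hs j)
  nlinarith [hopt1, hopt2]

end Stmt17

theorem stmt17 {d : ℕ} (hd : 0 < d) (β : Fin d → ℝ)
    (hsort : Antitone β) (hβnn : ∀ i, 0 ≤ β i) (hsum : ∑ i, β i = 1)
    (η : ℝ) (hη : 0 < η)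
    (gradΨ : (Fin d → ℝ) → (Fin d → ℝ))
    (hdiff : ∀ x : Fin d → ℝ, (∀ i, 0 ≤ x i) →
      HasFDerivAt (fun x : Fin d → ℝ => (1 / η) * Fstar β (η • x))
        (∑ i, gradΨ x i • (ContinuousLinearMap.proj i : (Fin d → ℝ) →L[ℝ] ℝ)) x) :
    (∀ x : Fin d → ℝ, (∀ i, 0 ≤ x i) →
      orderedNorm β x ≤ (1 / η) * Fstar β (η • x) ∧
        (1 / η) * Fstar β (η • x) ≤ orderedNorm β x + Real.log d / η) ∧
    (∀ x s : Fin d → ℝ, (∀ i, 0 ≤ x i) → (∀ i, 0 ≤ s i) → ∀ i,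
      gradΨ (x + s) i ≤
        Real.exp (η * univ.sup' ⟨⟨0, hd⟩, mem_univ _⟩ s) * gradΨ x i) := by
  constructor
  · intro x hx
    exact Stmt17.part1 hd hsort hβnn hsum hη x hx
  · intro x s hx hs i
    have hmi : ∀ k, s k ≤ Finset.univ.sup' ⟨⟨0, hd⟩, Finset.mem_univ _⟩ s :=
      fun k => Finset.le_sup' s (Finset.mem_univ k)
    have hm0 : 0 ≤ Finset.univ.sup' ⟨⟨0, hd⟩, Finset.mem_univ _⟩ s :=
      le_trans (hs ⟨0, hd⟩) (hmi ⟨0, hd⟩)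
    exact Stmt17.part2 hd hsort hβnn hsum hη hx hs (hdiff x hx)
      (hdiff (x + s) (fun k => add_nonneg (hx k) (hs k))) i _ hm0 hmi
end

section
/- Let p ∈ ℝ^d_{>0} be sorted non-increasingly and let y ∈ ℝ^d_{≥0} be a feasible point of the prefix-constrained region {y ≥ 0 : ∑_{i≤j} y_i ≤ ∑_{i≤j} β_i ∀j<d, ∑_i y_i = 1} such that the ratios α_i = y_i/p_i are non-decreasing in i and α_i ≠ α_{i+1} implies ∑_{j≤i} y_j = ∑_{j≤i} β_j. Then y is the unique minimizer of D(y,p) = ∑_i y_i ln(y_i/p_i) over this region. -/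
open Finset

lemma key_ineq_s19 {s t p : ℝ} (hs : 0 < s) (ht : 0 ≤ t) (hp : 0 < p) :
    (Real.log (s/p) + 1) * (t - s) ≤ t * Real.log (t/p) - s * Real.log (s/p) := by
  rcases eq_or_lt_of_le ht with h0 | h0
  · rw [← h0]; simp; nlinarith
  · have hlog : Real.log (s/t) ≤ s/t - 1 := Real.log_le_sub_one_of_pos (by positivity)
    have h1 : t * Real.log (s/t) ≤ s - t := by
      have := mul_le_mul_of_nonneg_left hlog (le_of_lt h0)
      calc t * Real.log (s/t) ≤ t * (s/t - 1) := this
        _ = s - t := by field_simp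
    rw [Real.log_div hs.ne' hp.ne', Real.log_div h0.ne' hp.ne'] at *
    rw [Real.log_div hs.ne' h0.ne'] at h1
    nlinarith

lemma key_strict {s t p : ℝ} (hs : 0 < s) (ht : 0 ≤ t) (hp : 0 < p) (hne : t ≠ s) :
    (Real.log (s/p) + 1) * (t - s) < t * Real.log (t/p) - s * Real.log (s/p) := by
  rcases eq_or_lt_of_le ht with h0 | h0
  · rw [← h0]; simp; nlinarith
  · have hx : s/t ≠ 1 := by
      intro h; apply hne; field_simp at h; linarith
    have hlog : Real.log (s/t) < s/t - 1 := Real.log_lt_sub_one_of_pos (by positivity) hx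
    have h1 : t * Real.log (s/t) < s - t := by
      have := mul_lt_mul_of_pos_left hlog h0
      calc t * Real.log (s/t) < t * (s/t - 1) := this
        _ = s - t := by field_simp
    rw [Real.log_div hs.ne' hp.ne', Real.log_div h0.ne' hp.ne'] at *
    rw [Real.log_div hs.ne' h0.ne'] at h1
    nlinarith

noncomputable def pref {d : ℕ} (f : Fin d → ℝ) (j : ℕ) : ℝ :=
  ∑ i ∈ univ.filter (fun i : Fin d => (i : ℕ) < j), f i

lemma pref_zero {d : ℕ} (f : Fin d → ℝ) : pref f 0 = 0 := by simp [pref]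

lemma pref_top {d : ℕ} (f : Fin d → ℝ) : pref f d = ∑ i, f i := by
  unfold pref
  rw [filter_true_of_mem (fun i _ => i.isLt)]

lemma pref_succ {d : ℕ} (f : Fin d → ℝ) (j : ℕ) (h : j < d) :
    pref f (j + 1) = pref f j + f ⟨j, h⟩ := by
  unfold pref
  rw [sum_filter, sum_filter]
  have key : ∀ i : Fin d, (if (i : ℕ) < j + 1 then f i else 0) =
      (if (i : ℕ) < j then f i else 0) + (if i = ⟨j, h⟩ then f i else 0) := by
    intro i
    rcases lt_trichotomy (i : ℕ) j with hlt | heq | hgt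
    · rw [if_pos (by omega), if_pos hlt, if_neg (by intro hh; subst hh; simp at hlt)]
      ring
    · rw [if_pos (by omega), if_neg (by omega), if_pos (by ext; simp [heq])]; ring
    · rw [if_neg (by omega), if_neg (by omega), if_neg (by intro hh; subst hh; simp at hgt)]
      ring
  rw [sum_congr rfl (fun i _ => key i), sum_add_distrib, sum_ite_eq' univ (⟨j, h⟩ : Fin d) f]
  simp

theorem stmt19 {d : ℕ} (β p : Fin d → ℝ)
    (hβsort : Antitone β) (hβnn : ∀ i, 0 ≤ β i) (hβsum : ∑ i, β i = 1)
    (hpsort : Antitone p) (hppos : ∀ i, 0 < p i)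
    (y : Fin d → ℝ) (hy : y ∈ prefixRegion β)
    (hratio : Monotone (fun i => y i / p i))
    (htight : ∀ i : Fin d, ∀ h : (i : ℕ) + 1 < d,
      y i / p i ≠ y ⟨(i : ℕ) + 1, h⟩ / p ⟨(i : ℕ) + 1, h⟩ →
        ∑ k ∈ univ.filter (fun k : Fin d => (k : ℕ) < (i : ℕ) + 1), y k =
          ∑ k ∈ univ.filter (fun k : Fin d => (k : ℕ) < (i : ℕ) + 1), β k) :
    (∀ y' ∈ prefixRegion β, relEntropy y p ≤ relEntropy y' p) ∧
    (∀ y' ∈ prefixRegion β, relEntropy y' p = relEntropy y p → y' = y) := by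
  obtain ⟨hynn, hyle, hysum⟩ := hy
  -- zeros of y are downward closed
  have hdc : ∀ i j : Fin d, i ≤ j → y j = 0 → y i = 0 := by
    intro i j hij hj
    have h1 : y i / p i ≤ y j / p j := hratio hij
    rw [hj, zero_div] at h1
    have h2 : 0 ≤ y i / p i := div_nonneg (hynn i) (hppos i).le
    have h3 : y i / p i = 0 := le_antisymm h1 h2
    rcases div_eq_zero_iff.mp h3 with h | h
    · exact h
    · exact absurd h (hppos i).ne'
  have hex : (univ.filter (fun i : Fin d => y i ≠ 0)).Nonempty := by
    by_contra h
    rw [not_nonempty_iff_eq_empty, filter_eq_empty_iff] at h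
    simp only [mem_univ, ne_eq, not_not, forall_true_left] at h
    have h' : ∀ i : Fin d, y i = 0 := h
    rw [Finset.sum_congr rfl (fun i _ => h' i)] at hysum
    simp at hysum
  set i0 : Fin d := (univ.filter (fun i : Fin d => y i ≠ 0)).min' hex with hi0def
  have hi0 : y i0 ≠ 0 := (mem_filter.mp ((univ.filter _).min'_mem hex)).2
  have hmin : ∀ i : Fin d, y i ≠ 0 → i0 ≤ i := fun i hi =>
    min'_le _ _ (mem_filter.mpr ⟨mem_univ i, hi⟩)
  have hpos : ∀ i : Fin d, i0 ≤ i → 0 < y i := by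
    intro i hle
    rcases (hynn i).lt_or_eq with h | h
    · exact h
    · exact absurd (hdc i0 i hle h.symm) hi0
  have hzlt : ∀ i : Fin d, i < i0 → y i = 0 := by
    intro i hlt
    by_contra h
    exact absurd (hmin i h) (not_le.mpr hlt)
  -- prefix of y up to i0 is zero
  have hprefy0 : pref y (i0 : ℕ) = 0 := by
    apply Finset.sum_eq_zero
    intro k hk
    rw [mem_filter] at hk
    exact hzlt k (Fin.lt_def.mpr hk.2)
  -- prefix of β up to i0 is zero
  have hβ0 : pref β (i0 : ℕ) = 0 := by
    rcases Nat.eq_zero_or_pos (i0 : ℕ) with h0 | h0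
    · rw [h0, pref_zero]
    · obtain ⟨n, hn⟩ : ∃ n, (i0 : ℕ) = n + 1 := ⟨(i0 : ℕ) - 1, by omega⟩
      have hnd : n + 1 < d := hn ▸ i0.isLt
      have hnd' : n < d := by omega
      have hne : y ⟨n, hnd'⟩ / p ⟨n, hnd'⟩ ≠ y ⟨n+1, hnd⟩ / p ⟨n+1, hnd⟩ := by
        have h1 : y ⟨n, hnd'⟩ = 0 := hzlt _ (by rw [Fin.lt_def]; simp; omega)
        have h2 : (⟨n+1, hnd⟩ : Fin d) = i0 := by ext; simp [hn]
        rw [h1, zero_div, h2]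
        intro hcon
        have hp1 := div_pos (hpos i0 le_rfl) (hppos i0)
        linarith
      have ht := htight ⟨n, hnd'⟩ hnd (by simpa using hne)
      simp only [Fin.val_mk] at ht
      have ht' : pref y (n+1) = pref β (n+1) := ht
      rw [hn]
      rw [← ht']
      rw [← hn]
      exact hprefy0
  -- any feasible y' vanishes below i0
  have hforce : ∀ y' ∈ prefixRegion β, ∀ i : Fin d, i < i0 → y' i = 0 := by
    intro y' hy' i hi
    obtain ⟨h1, h2, h3⟩ := hy'
    have hle : pref y' (i0 : ℕ) ≤ pref β (i0 : ℕ) := h2 (i0 : ℕ) i0.isLt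
    have hsum0 : pref y' (i0 : ℕ) = 0 := by
      refine le_antisymm (by rw [← hβ0]; exact hle) ?_
      exact Finset.sum_nonneg (fun k _ => h1 k)
    exact (Finset.sum_eq_zero_iff_of_nonneg (fun k _ => h1 k)).mp hsum0 i
      (mem_filter.mpr ⟨mem_univ i, Fin.lt_def.mp hi⟩)
  -- the multiplier vector
  set c : Fin d → ℝ := fun i => Real.log (y (max i i0) / p (max i i0)) with hc
  have hceq : ∀ i : Fin d, i0 ≤ i → c i = Real.log (y i / p i) := by
    intro i h; simp [hc, max_eq_left h]
  have hcmono : Monotone c := by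
    intro i j hij
    apply Real.log_le_log
    · exact div_pos (hpos _ (le_max_right _ _)) (hppos _)
    · exact hratio (max_le_max hij le_rfl)
  -- Abel summation bound
  have habel : ∀ y', y' ∈ prefixRegion β → 0 ≤ ∑ i, c i * (y' i - y i) := by
    intro y' hy'
    obtain ⟨h1, h2, h3⟩ := hy'
    set z : Fin d → ℝ := fun i => y' i - y i with hz
    have hprefz : ∀ m : ℕ, pref z m = pref y' m - pref y m := by
      intro m; unfold pref; rw [← sum_sub_distrib]
    have hS : ∀ n : ℕ, (hn : n + 1 < d) → (hn' : n < d) →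
        c ⟨n, hn'⟩ ≠ c ⟨n+1, hn⟩ → pref z (n+1) ≤ 0 := by
      intro n hn hn' hne
      have hi0n : i0 ≤ (⟨n, hn'⟩ : Fin d) := by
        by_contra hcon
        push_neg at hcon
        apply hne
        have e1 : max (⟨n, hn'⟩ : Fin d) i0 = i0 := max_eq_right hcon.le
        have e2 : max (⟨n+1, hn⟩ : Fin d) i0 = i0 := by
          apply max_eq_right
          rw [Fin.le_def]
          rw [Fin.lt_def] at hcon
          simp only [Fin.val_mk] at hcon ⊢
          omega
        simp [hc, e1, e2]
      have hαne : y ⟨n, hn'⟩ / p ⟨n, hn'⟩ ≠ y ⟨n+1, hn⟩ / p ⟨n+1, hn⟩ := by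
        have e1 : max (⟨n, hn'⟩ : Fin d) i0 = ⟨n, hn'⟩ := max_eq_left hi0n
        have e2 : max (⟨n+1, hn⟩ : Fin d) i0 = ⟨n+1, hn⟩ := by
          apply max_eq_left
          exact le_trans hi0n (by rw [Fin.le_def]; simp)
        intro hcon; apply hne; simp only [hc, e1, e2, hcon]
      have ht := htight ⟨n, hn'⟩ hn (by simpa using hαne)
      simp only [Fin.val_mk] at ht
      have ht' : pref y (n+1) = pref β (n+1) := ht
      have hley' : pref y' (n+1) ≤ pref β (n+1) := h2 (n+1) hn
      rw [hprefz, ht']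
      linarith
    have main : ∀ n : ℕ, (hn : n < d) →
        c ⟨n, hn⟩ * pref z (n+1) ≤ pref (fun i => c i * z i) (n+1) := by
      intro n
      induction n with
      | zero =>
        intro hn
        rw [pref_succ _ 0 hn, pref_succ _ 0 hn, pref_zero, pref_zero]
        simp
      | succ m ih =>
        intro hn
        have hm : m < d := by omega
        have hih := ih hm
        rw [pref_succ z (m+1) hn, pref_succ (fun i => c i * z i) (m+1) hn]
        have hstep : c ⟨m+1, hn⟩ * pref z (m+1) ≤ c ⟨m, hm⟩ * pref z (m+1) := by
          rcases eq_or_ne (c ⟨m, hm⟩) (c ⟨m+1, hn⟩) with he | he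
          · rw [he]
          · have hS' := hS m hn hm he
            have hcle : c ⟨m, hm⟩ ≤ c ⟨m+1, hn⟩ := hcmono (by rw [Fin.le_def]; simp)
            exact mul_le_mul_of_nonpos_right hcle hS'
        rw [mul_add]
        linarith
    have hd : 0 < d := lt_of_le_of_lt (Nat.zero_le _) i0.isLt
    obtain ⟨n, hn⟩ : ∃ n, d = n + 1 := ⟨d - 1, by omega⟩
    have hmain := main n (by omega)
    have hzd : pref z d = 0 := by
      rw [pref_top]
      have : ∑ i, z i = ∑ i, y' i - ∑ i, y i := by rw [← sum_sub_distrib]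
      rw [this, h3, hysum]; ring
    have hzd' : pref z (n+1) = 0 := by rw [show n+1 = d from hn.symm]; exact hzd
    have hmain2 : (0:ℝ) ≤ pref (fun i => c i * z i) (n+1) := by
      calc (0:ℝ) = c ⟨n, by omega⟩ * pref z (n+1) := by rw [hzd']; ring
        _ ≤ _ := hmain
    have hfin : pref (fun i => c i * z i) (n+1) = ∑ i, c i * z i := by
      rw [← hn, pref_top]
    rw [hfin] at hmain2
    exact hmain2
  -- pointwise convexity bound
  have hpt : ∀ y', y' ∈ prefixRegion β → ∀ i : Fin d,
      (c i + 1) * (y' i - y i) ≤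
        y' i * Real.log (y' i / p i) - y i * Real.log (y i / p i) := by
    intro y' hy' i
    rcases lt_or_ge i i0 with h | h
    · rw [hforce y' hy' i h, hzlt i h]; simp
    · rw [hceq i h]
      exact key_ineq_s19 (hpos i h) (hy'.1 i) (hppos i)
  -- sum identity
  have hsum_id : ∀ y', y' ∈ prefixRegion β →
      relEntropy y' p - relEntropy y p =
        (∑ i, ((y' i * Real.log (y' i / p i) - y i * Real.log (y i / p i))
          - (c i + 1) * (y' i - y i)))
        + ∑ i, c i * (y' i - y i) := by
    intro y' hy'
    have hz0 : ∑ i, (y' i - y i) = 0 := by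
      rw [sum_sub_distrib, hy'.2.2, hysum]; ring
    have e1 : ∀ i : Fin d,
        ((y' i * Real.log (y' i / p i) - y i * Real.log (y i / p i))
          - (c i + 1) * (y' i - y i)) + c i * (y' i - y i)
        = (y' i * Real.log (y' i / p i) - y i * Real.log (y i / p i)) - (y' i - y i) := by
      intro i; ring
    rw [← sum_add_distrib, sum_congr rfl (fun i _ => e1 i), sum_sub_distrib, hz0,
      sum_sub_distrib]
    unfold relEntropy; ring
  constructor
  · intro y' hy'
    have h1 := habel y' hy'
    have h2 := hsum_id y' hy'
    have h3 : 0 ≤ ∑ i, ((y' i * Real.log (y' i / p i) - y i * Real.log (y i / p i))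
        - (c i + 1) * (y' i - y i)) :=
      sum_nonneg (fun i _ => by have := hpt y' hy' i; linarith)
    linarith
  · intro y' hy' heq
    have h1 := habel y' hy'
    have h2 := hsum_id y' hy'
    rw [heq] at h2
    have h3 : ∀ i ∈ univ, 0 ≤ ((y' i * Real.log (y' i / p i) - y i * Real.log (y i / p i))
        - (c i + 1) * (y' i - y i)) :=
      fun i _ => by have := hpt y' hy' i; linarith
    have h4 : ∑ i, ((y' i * Real.log (y' i / p i) - y i * Real.log (y i / p i))
        - (c i + 1) * (y' i - y i)) = 0 := by
      refine le_antisymm (by linarith) (sum_nonneg h3)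
    have h5 := (Finset.sum_eq_zero_iff_of_nonneg h3).mp h4
    funext i
    rcases lt_or_ge i i0 with h | h
    · rw [hforce y' hy' i h, hzlt i h]
    · by_contra hne
      have hstr := key_strict (hpos i h) (hy'.1 i) (hppos i) hne
      have h6 := h5 i (mem_univ i)
      rw [hceq i h] at h6
      linarith
end
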